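/- arXiv:1301.0973 — 7 statements merged into one kernel-verified Lean document; each statement's English description precedes it below -/
import Mathlib

section
/- Let n ≥ 2 and let A be a signed graph on n vertices whose underlying graph is connected. Then the exterior (n−1)-th power ∧^{n−1} A is balanced if and only if A is anti-balanced, i.e. there exists a diagonal matrix D with all diagonal entries ±1 such that D * A * D = −|A| (entrywise). (Equivalently: every even cycle of A is positive and every odd cycle of A is negative.) -/
open Matrix Finset

def IsSignedMatrix {ι : Type*} (B : Matrix ι ι ℝ) : Prop :=
  B.IsSymm ∧ (∀ i, B i i = 0) ∧ ∀ i j, B i j = -1 ∨ B i j = 0 ∨ B i j = 1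

def IsBalancedMatrix {ι : Type*} [Fintype ι] (B : Matrix ι ι ℝ) : Prop :=
  ∃ D : Matrix ι ι ℝ, D.IsDiag ∧ (∀ i, D i i = 1 ∨ D i i = -1) ∧
    D * B * D = Matrix.of fun i j => |B i j|

def cartPow {n : ℕ} (A : Matrix (Fin n) (Fin n) ℝ) (k : ℕ) :
    Matrix (Fin k → Fin n) (Fin k → Fin n) ℝ :=
  Matrix.of fun u v => ∑ i : Fin k, A (u i) (v i) *
    ∏ j ∈ Finset.univ.erase i, (if u j = v j then (1 : ℝ) else 0)

noncomputable def enumOf {n k : ℕ} (r : LinearOrder (Fin n)) (S : Finset (Fin n))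
    (h : S.card = k) : Fin k → Fin n :=
  fun i => ((@Finset.orderIsoOfFin (Fin n) r S k h) i : Fin n)

noncomputable def altOf {n : ℕ} (k : ℕ) (r : LinearOrder (Fin n)) :
    Matrix (Fin k → Fin n) {S : Finset (Fin n) // S.card = k} ℝ :=
  Matrix.of fun u S =>
    (Real.sqrt (Nat.factorial k))⁻¹ *
      ∑ π : Equiv.Perm (Fin k),
        if u = enumOf r S.1 S.2 ∘ π then ((Equiv.Perm.sign π : ℤ) : ℝ) else 0

noncomputable def alt (n k : ℕ) :
    Matrix (Fin k → Fin n) {S : Finset (Fin n) // S.card = k} ℝ :=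
  altOf k inferInstance

noncomputable def extPow {n : ℕ} (A : Matrix (Fin n) (Fin n) ℝ) (k : ℕ) :
    Matrix {S : Finset (Fin n) // S.card = k} {S : Finset (Fin n) // S.card = k} ℝ :=
  (alt n k)ᵀ * cartPow A k * alt n k

def IsPathMatrix {n : ℕ} (A : Matrix (Fin n) (Fin n) ℝ) : Prop :=
  ∃ g : Equiv.Perm (Fin n), ∀ i j : Fin n,
    |A (g i) (g j)| = 1 ↔ ((i : ℤ) - j = 1 ∨ (j : ℤ) - i = 1)

def IsCycleMatrix {n : ℕ} (A : Matrix (Fin n) (Fin n) ℝ) : Prop :=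
  3 ≤ n ∧ ∃ g : Equiv.Perm (Fin n), ∀ i j : Fin n,
    |A (g i) (g j)| = 1 ↔
      ((i : ℤ) - j ≡ 1 [ZMOD (n : ℤ)] ∨ (i : ℤ) - j ≡ -1 [ZMOD (n : ℤ)])

def signedAdjGraph {n : ℕ} (A : Matrix (Fin n) (Fin n) ℝ) : SimpleGraph (Fin n) :=
  SimpleGraph.fromRel (fun u v => |A u v| = 1)

section Lift
variable {n k : ℕ}

/-- lift a permutation of `Fin n` mapping `S` onto `T` to a permutation of positions. -/
noncomputable def plift (S T : Finset (Fin n)) (hS : S.card = k) (hT : T.card = k)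
    (ρ : Equiv.Perm (Fin n)) (h : ∀ x, x ∈ S ↔ ρ x ∈ T) : Equiv.Perm (Fin k) :=
  ((S.orderIsoOfFin hS).toEquiv.trans (ρ.subtypeEquiv h)).trans
    (T.orderIsoOfFin hT).toEquiv.symm

lemma enum_plift (S T : Finset (Fin n)) (hS : S.card = k) (hT : T.card = k)
    (ρ : Equiv.Perm (Fin n)) (h : ∀ x, x ∈ S ↔ ρ x ∈ T) (i : Fin k) :
    enumOf inferInstance T hT (plift S T hS hT ρ h i) = ρ (enumOf inferInstance S hS i) := by
  simp [plift, enumOf, Equiv.subtypeEquiv]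

lemma plift_trans (S T U : Finset (Fin n)) (hS : S.card = k) (hT : T.card = k)
    (hU : U.card = k) (ρ₁ ρ₂ : Equiv.Perm (Fin n))
    (h₁ : ∀ x, x ∈ S ↔ ρ₁ x ∈ T) (h₂ : ∀ x, x ∈ T ↔ ρ₂ x ∈ U) :
    plift T U hT hU ρ₂ h₂ * plift S T hS hT ρ₁ h₁ =
      plift S U hS hU (ρ₁.trans ρ₂) (fun x => (h₁ x).trans (h₂ _)) := by
  ext i
  simp [plift, Equiv.subtypeEquiv]

lemma plift_congr (S T : Finset (Fin n)) (hS : S.card = k) (hT : T.card = k)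
    (ρ ρ' : Equiv.Perm (Fin n))
    (h : ∀ x, x ∈ S ↔ ρ x ∈ T) (h' : ∀ x, x ∈ S ↔ ρ' x ∈ T)
    (hag : ∀ x ∈ S, ρ x = ρ' x) :
    plift S T hS hT ρ h = plift S T hS hT ρ' h' := by
  ext i
  simp only [plift, Equiv.trans_apply, Equiv.subtypeEquiv]
  congr 2
  exact Subtype.ext (hag _ (S.orderIsoOfFin hS i).2)

lemma plift_refl (S : Finset (Fin n)) (hS : S.card = k)
    (h : ∀ x, x ∈ S ↔ Equiv.refl (Fin n) x ∈ S) :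
    plift S S hS hS (Equiv.refl (Fin n)) h = 1 := by
  ext i
  simp [plift]

lemma plift_id (S : Finset (Fin n)) (hS : S.card = k) (ρ : Equiv.Perm (Fin n))
    (h : ∀ x, x ∈ S ↔ ρ x ∈ S) (hag : ∀ x ∈ S, ρ x = x) :
    plift S S hS hS ρ h = 1 := by
  rw [plift_congr S S hS hS ρ (Equiv.refl _) h (fun x => Iff.rfl) hag]
  exact plift_refl S hS _

lemma subtypeEquiv_swap (a b : Fin n) (S : Finset (Fin n)) (ha : a ∈ S) (hb : b ∈ S)
    (h : ∀ x, x ∈ S ↔ Equiv.swap a b x ∈ S) :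
    (Equiv.swap a b).subtypeEquiv h =
      Equiv.swap (⟨a, ha⟩ : {x // x ∈ S}) ⟨b, hb⟩ := by
  apply Equiv.ext
  rintro ⟨x, hx⟩
  apply Subtype.ext
  rw [Equiv.subtypeEquiv_apply]
  by_cases hxa : x = a
  · subst hxa
    simp [Equiv.swap_apply_left, Subtype.ext_iff]
  · by_cases hxb : x = b
    · subst hxb
      simp [Equiv.swap_apply_right, Subtype.ext_iff]
    · have h1 : (Equiv.swap (⟨a, ha⟩ : {x // x ∈ S}) ⟨b, hb⟩) ⟨x, hx⟩ = ⟨x, hx⟩ :=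
        Equiv.swap_apply_of_ne_of_ne (by simp [Subtype.ext_iff, hxa])
          (by simp [Subtype.ext_iff, hxb])
      rw [h1]
      simp [Equiv.swap_apply_of_ne_of_ne hxa hxb]

lemma sign_plift_self (S : Finset (Fin n)) (hS : S.card = k) (ρ : Equiv.Perm (Fin n))
    (h : ∀ x, x ∈ S ↔ ρ x ∈ S) :
    Equiv.Perm.sign (plift S S hS hS ρ h) = Equiv.Perm.sign (ρ.subtypeEquiv h) := by
  have : plift S S hS hS ρ h =
      ((((S.orderIsoOfFin hS).toEquiv.symm).symm.trans (ρ.subtypeEquiv h)).trans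
        (S.orderIsoOfFin hS).toEquiv.symm) := rfl
  rw [this, Equiv.Perm.sign_symm_trans_trans]

lemma sign_plift_swap (S : Finset (Fin n)) (hS : S.card = k) (a b : Fin n)
    (ha : a ∈ S) (hb : b ∈ S) (hab : a ≠ b)
    (h : ∀ x, x ∈ S ↔ Equiv.swap a b x ∈ S) :
    Equiv.Perm.sign (plift S S hS hS (Equiv.swap a b) h) = -1 := by
  rw [sign_plift_self, subtypeEquiv_swap a b S ha hb h, Equiv.Perm.sign_swap]
  simp [Subtype.ext_iff, hab]

end Lift


section Alt
variable {n : ℕ}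

local notation "sr" π => ((Equiv.Perm.sign π : ℤ) : ℝ)

lemma perm_eq_of_eq_off {k : ℕ} (π σ : Equiv.Perm (Fin k)) (i : Fin k)
    (h : ∀ j, j ≠ i → π j = σ j) : π = σ := by
  have key : σ.symm (π i) = i := by
    by_contra hj
    have h2 := h _ hj
    rw [Equiv.apply_symm_apply] at h2
    exact hj (π.injective h2)
  have hi : π i = σ i := by
    conv_lhs => rw [← Equiv.apply_symm_apply σ (π i), key]
  ext j
  by_cases hj : j = i
  · simp [hj, hi]
  · simp [h j hj]

lemma alt_sum {k : ℕ} (S : {S : Finset (Fin n) // S.card = k})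
    (g : (Fin k → Fin n) → ℝ) :
    ∑ u : Fin k → Fin n, alt n k u S * g u =
      (Real.sqrt (Nat.factorial k))⁻¹ *
        ∑ π : Equiv.Perm (Fin k), (sr π) * g (enumOf inferInstance S.1 S.2 ∘ π) := by
  simp only [alt, altOf, Matrix.of_apply]
  have key : ∀ u : Fin k → Fin n, ((Real.sqrt (Nat.factorial k))⁻¹ *
      ∑ π : Equiv.Perm (Fin k),
        (if u = enumOf inferInstance S.1 S.2 ∘ π then (sr π) else 0)) * g u
      = (Real.sqrt (Nat.factorial k))⁻¹ *
        ∑ π : Equiv.Perm (Fin k),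
          (if u = enumOf inferInstance S.1 S.2 ∘ π then (sr π) * g u else 0) := by
    intro u
    rw [mul_assoc, Finset.sum_mul]
    congr 1
    refine Finset.sum_congr rfl fun π _ => ?_
    rw [ite_mul, zero_mul]
  simp only [key]
  rw [← Finset.mul_sum, Finset.sum_comm]
  congr 1
  refine Finset.sum_congr rfl fun π _ => ?_
  rw [Finset.sum_ite_eq' Finset.univ (enumOf inferInstance S.1 S.2 ∘ π)
    (fun u => (sr π) * g u)]
  simp

lemma extPow_eq {k : ℕ} (A : Matrix (Fin n) (Fin n) ℝ)
    (S T : {S : Finset (Fin n) // S.card = k}) :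
    extPow A k S T = (Real.sqrt (Nat.factorial k))⁻¹ *
      ∑ σ : Equiv.Perm (Fin k), (sr σ) *
        ((Real.sqrt (Nat.factorial k))⁻¹ *
          ∑ π : Equiv.Perm (Fin k), (sr π) *
            cartPow A k (enumOf inferInstance S.1 S.2 ∘ π)
              (enumOf inferInstance T.1 T.2 ∘ σ)) := by
  have h1 : extPow A k S T = ∑ v : Fin k → Fin n, alt n k v T *
      (∑ u : Fin k → Fin n, alt n k u S * cartPow A k u v) := by
    simp only [extPow, Matrix.mul_apply, Matrix.transpose_apply]
    exact Finset.sum_congr rfl fun v _ => mul_comm _ _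
  rw [h1]
  have h2 : ∀ v, alt n k v T * (∑ u : Fin k → Fin n, alt n k u S * cartPow A k u v)
      = alt n k v T * ((Real.sqrt (Nat.factorial k))⁻¹ *
          ∑ π : Equiv.Perm (Fin k), (sr π) *
            cartPow A k (enumOf inferInstance S.1 S.2 ∘ π) v) := by
    intro v
    rw [alt_sum S (fun u => cartPow A k u v)]
  simp only [h2]
  rw [alt_sum T]

end Alt

section Cart
variable {n k : ℕ}

lemma enum_mem (S : Finset (Fin n)) (hS : S.card = k) (i : Fin k) :
    enumOf inferInstance S hS i ∈ S := (S.orderIsoOfFin hS i).2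

lemma enum_inj (S : Finset (Fin n)) (hS : S.card = k) :
    Function.Injective (enumOf inferInstance S hS) := by
  intro i j hij
  exact (S.orderIsoOfFin hS).injective (Subtype.ext hij)

lemma enum_symm (S : Finset (Fin n)) (hS : S.card = k) (x : Fin n) (hx : x ∈ S) :
    enumOf inferInstance S hS ((S.orderIsoOfFin hS).symm ⟨x, hx⟩) = x := by
  simp [enumOf]

lemma mem_iff_ne {S : Finset (Fin n)} {b : Fin n} (hSc : Sᶜ = {b}) (x : Fin n) :
    x ∈ S ↔ x ≠ b := by
  have : x ∉ S ↔ x = b := by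
    rw [← Finset.mem_compl, hSc, Finset.mem_singleton]
  constructor
  · intro hx hxb
    exact (this.mpr hxb) hx
  · intro hxb
    by_contra hx
    exact hxb (this.mp hx)

lemma compl_singleton_ne {S T : Finset (Fin n)} {a b : Fin n}
    (hSc : Sᶜ = {b}) (hTc : Tᶜ = {a}) (hST : S ≠ T) : a ≠ b := by
  intro hab
  apply hST
  have : Sᶜ = Tᶜ := by rw [hSc, hTc, hab]
  simpa using congrArg (·ᶜ) this

lemma mem_swap_iff {S T : Finset (Fin n)} {a b : Fin n}
    (hSc : Sᶜ = {b}) (hTc : Tᶜ = {a}) :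
    ∀ x, x ∈ S ↔ Equiv.swap b a x ∈ T := by
  intro x
  rw [mem_iff_ne hSc, mem_iff_ne hTc]
  have key : (Equiv.swap b a) x = a ↔ x = b := by
    rw [Equiv.apply_eq_iff_eq_symm_apply]
    simp
  exact (not_congr key).symm

lemma cart_diag (A : Matrix (Fin n) (Fin n) ℝ) (hdiag : ∀ i, A i i = 0)
    (S : Finset (Fin n)) (hS : S.card = k) (π σ : Equiv.Perm (Fin k)) :
    cartPow A k (enumOf inferInstance S hS ∘ π) (enumOf inferInstance S hS ∘ σ) = 0 := by
  simp only [cartPow, Matrix.of_apply]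
  apply Finset.sum_eq_zero
  intro i _
  by_cases hall : ∀ j, j ≠ i → π j = σ j
  · have hπσ : π = σ := perm_eq_of_eq_off π σ i hall
    subst hπσ
    simp [hdiag]
  · push_neg at hall
    obtain ⟨j, hji, hj⟩ := hall
    rw [Finset.prod_eq_zero (Finset.mem_erase.mpr ⟨hji, Finset.mem_univ j⟩)]
    · exact mul_zero _
    · rw [if_neg]
      intro hc
      exact hj (enum_inj S hS hc)

lemma cart_offdiag (A : Matrix (Fin n) (Fin n) ℝ)
    (S T : Finset (Fin n)) (hS : S.card = k) (hT : T.card = k) (a b : Fin n)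
    (hSc : Sᶜ = {b}) (hTc : Tᶜ = {a}) (hST : S ≠ T) (π σ : Equiv.Perm (Fin k)) :
    cartPow A k (enumOf inferInstance S hS ∘ π) (enumOf inferInstance T hT ∘ σ) =
      if σ = plift S T hS hT (Equiv.swap b a) (mem_swap_iff hSc hTc) * π
        then A a b else 0 := by
  have hab : a ≠ b := compl_singleton_ne hSc hTc hST
  have haS : a ∈ S := (mem_iff_ne hSc a).mpr hab
  have haT : a ∉ T := fun h => ((mem_iff_ne hTc a).mp h) rfl
  set f := plift S T hS hT (Equiv.swap b a) (mem_swap_iff hSc hTc) with hf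
  have hfT : ∀ x : Fin k, enumOf inferInstance T hT (f x) =
      Equiv.swap b a (enumOf inferInstance S hS x) := fun x =>
    enum_plift S T hS hT (Equiv.swap b a) (mem_swap_iff hSc hTc) x
  set i₀ : Fin k := π.symm ((S.orderIsoOfFin hS).symm ⟨a, haS⟩) with hi₀
  have hwi₀ : enumOf inferInstance S hS (π i₀) = a := by
    rw [hi₀, Equiv.apply_symm_apply]
    exact enum_symm S hS a haS
  simp only [cartPow, Matrix.of_apply]
  by_cases hσ : σ = f * π
  · rw [if_pos hσ]
    rw [Finset.sum_eq_single i₀]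
    · have hprod : ∏ j ∈ Finset.univ.erase i₀,
          (if (enumOf inferInstance S hS ∘ π) j = (enumOf inferInstance T hT ∘ σ) j
            then (1:ℝ) else 0) = 1 := by
        apply Finset.prod_eq_one
        intro j hj
        rw [if_pos]
        have hjne : π j ≠ π i₀ := fun hc =>
          (Finset.mem_erase.mp hj).1 (π.injective hc)
        have h1 : enumOf inferInstance S hS (π j) ≠ a := by
          rw [← hwi₀]
          intro hc
          exact hjne (enum_inj S hS hc)
        have h2 : enumOf inferInstance S hS (π j) ≠ b :=
          (mem_iff_ne hSc _).mp (enum_mem S hS (π j))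
        simp only [Function.comp_apply, hσ, Equiv.Perm.mul_apply, hfT]
        rw [Equiv.swap_apply_of_ne_of_ne h2 h1]
      rw [hprod, mul_one]
      simp only [Function.comp_apply, hσ, Equiv.Perm.mul_apply, hfT, hwi₀]
      rw [Equiv.swap_apply_right]
    · intro i _ hi
      rw [Finset.prod_eq_zero (Finset.mem_erase.mpr ⟨(Ne.symm hi : i₀ ≠ i), Finset.mem_univ i₀⟩)]
      · exact mul_zero _
      · rw [if_neg]
        simp only [Function.comp_apply, hwi₀]
        intro hc
        exact haT (hc ▸ enum_mem T hT (σ i₀))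
    · intro h
      exact absurd (Finset.mem_univ i₀) h
  · rw [if_neg hσ]
    apply Finset.sum_eq_zero
    intro i _
    by_cases hall : ∀ j, j ≠ i →
        enumOf inferInstance S hS (π j) = enumOf inferInstance T hT (σ j)
    · exfalso
      apply hσ
      apply perm_eq_of_eq_off σ (f * π) i
      intro j hj
      have h1 : enumOf inferInstance S hS (π j) ≠ a := by
        intro hc
        exact haT (hc ▸ (hall j hj) ▸ enum_mem T hT (σ j))
      have h2 : enumOf inferInstance S hS (π j) ≠ b :=
        (mem_iff_ne hSc _).mp (enum_mem S hS (π j))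
      apply enum_inj T hT
      rw [Equiv.Perm.mul_apply, hfT, Equiv.swap_apply_of_ne_of_ne h2 h1, hall j hj]
    · push_neg at hall
      obtain ⟨j, hji, hj⟩ := hall
      rw [Finset.prod_eq_zero (Finset.mem_erase.mpr ⟨hji, Finset.mem_univ j⟩)]
      · exact mul_zero _
      · exact if_neg hj

end Cart

section ExtEval
variable {n k : ℕ}

local notation "sr" π => ((Equiv.Perm.sign π : ℤ) : ℝ)

lemma extPow_diag (A : Matrix (Fin n) (Fin n) ℝ) (hdiag : ∀ i, A i i = 0)
    (S : {S : Finset (Fin n) // S.card = k}) : extPow A k S S = 0 := by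
  rw [extPow_eq]
  simp [cart_diag A hdiag S.1 S.2]

lemma extPow_offdiag (A : Matrix (Fin n) (Fin n) ℝ)
    (S T : {S : Finset (Fin n) // S.card = k}) (a b : Fin n)
    (hSc : (S.1)ᶜ = {b}) (hTc : (T.1)ᶜ = {a}) (hST : S.1 ≠ T.1) :
    extPow A k S T =
      ((Equiv.Perm.sign (plift S.1 T.1 S.2 T.2 (Equiv.swap b a)
        (mem_swap_iff hSc hTc)) : ℤ) : ℝ) * A a b := by
  set f := plift S.1 T.1 S.2 T.2 (Equiv.swap b a) (mem_swap_iff hSc hTc) with hf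
  rw [extPow_eq]
  have hco := cart_offdiag A S.1 T.1 S.2 T.2 a b hSc hTc hST
  simp only [hco, ← hf]
  have inner : ∀ σ : Equiv.Perm (Fin k),
      (∑ π : Equiv.Perm (Fin k), (sr π) * (if σ = f * π then A a b else 0)) =
        (sr (f⁻¹ * σ)) * A a b := by
    intro σ
    rw [Finset.sum_eq_single (f⁻¹ * σ)]
    · rw [if_pos (by group)]
    · intro π _ hπ
      rw [if_neg, mul_zero]
      intro hc
      apply hπ
      rw [hc]
      group
    · intro h
      exact absurd (Finset.mem_univ _) h
  simp only [inner]
  have hsgn : ∀ σ : Equiv.Perm (Fin k),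
      (sr σ) * ((Real.sqrt (Nat.factorial k))⁻¹ * ((sr (f⁻¹ * σ)) * A a b)) =
        (Real.sqrt (Nat.factorial k))⁻¹ * ((sr f) * A a b) := by
    intro σ
    have h1 : (sr (f⁻¹ * σ)) = (sr f) * (sr σ) := by
      rw [_root_.map_mul, Equiv.Perm.sign_inv]
      push_cast
      ring
    have h2 : (sr σ) * (sr σ) = 1 := by
      rcases Int.units_eq_one_or (Equiv.Perm.sign σ) with h | h <;> rw [h] <;> norm_num
    calc (sr σ) * ((Real.sqrt (Nat.factorial k))⁻¹ * ((sr (f⁻¹ * σ)) * A a b))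
        = (Real.sqrt (Nat.factorial k))⁻¹ * (((sr σ) * (sr σ)) * ((sr f) * A a b)) := by
          rw [h1]; ring
      _ = (Real.sqrt (Nat.factorial k))⁻¹ * ((sr f) * A a b) := by rw [h2, one_mul]
  simp only [hsgn]
  rw [Finset.sum_const, Finset.card_univ, Fintype.card_perm, nsmul_eq_mul]
  have h3 : (0 : ℝ) < (Nat.factorial k : ℝ) := by
    exact_mod_cast Nat.factorial_pos k
  have h4 : Real.sqrt (Nat.factorial k) ≠ 0 := by
    positivity
  rw [← mul_assoc, ← mul_assoc, inv_mul_eq_div, div_mul_eq_mul_div,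
    ← Real.sqrt_mul_self (le_of_lt h3)]
  field_simp
  rw [Fintype.card_fin, Real.sqrt_sq h3.le, Real.sq_sqrt h3.le]

end ExtEval

section Sign
variable {n k : ℕ}

lemma sign_symm_plift (S T : Finset (Fin n)) (hS : S.card = k) (hT : T.card = k)
    (a b : Fin n) (hSc : Sᶜ = {b}) (hTc : Tᶜ = {a}) :
    Equiv.Perm.sign (plift T S hT hS (Equiv.swap a b) (mem_swap_iff hTc hSc)) *
      Equiv.Perm.sign (plift S T hS hT (Equiv.swap b a) (mem_swap_iff hSc hTc)) = 1 := by
  rw [← _root_.map_mul, plift_trans S T S hS hT hS (Equiv.swap b a) (Equiv.swap a b)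
    (mem_swap_iff hSc hTc) (mem_swap_iff hTc hSc)]
  rw [plift_id S hS _ _ (fun x _ => by simp [Equiv.swap_comm a b])]
  simp

lemma sign_cocycle_plift (S T U : Finset (Fin n)) (hS : S.card = k) (hT : T.card = k)
    (hU : U.card = k) (a b c : Fin n)
    (hSc : Sᶜ = {b}) (hTc : Tᶜ = {a}) (hUc : Uᶜ = {c})
    (hST : S ≠ T) (hSU : S ≠ U) (hTU : T ≠ U) :
    Equiv.Perm.sign (plift T U hT hU (Equiv.swap a c) (mem_swap_iff hTc hUc)) *
      Equiv.Perm.sign (plift S T hS hT (Equiv.swap b a) (mem_swap_iff hSc hTc)) =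
    - Equiv.Perm.sign (plift S U hS hU (Equiv.swap b c) (mem_swap_iff hSc hUc)) := by
  have hab : a ≠ b := compl_singleton_ne hSc hTc hST
  have hcb : c ≠ b := compl_singleton_ne hSc hUc hSU
  have hca : c ≠ a := compl_singleton_ne hTc hUc hTU
  have hmemτ : ∀ x, x ∈ S ↔ Equiv.swap a c x ∈ S := by
    intro x
    rw [mem_iff_ne hSc, mem_iff_ne hSc]
    have key : (Equiv.swap a c) x = b ↔ x = b := by
      rw [Equiv.apply_eq_iff_eq_symm_apply]
      simp [Equiv.swap_apply_of_ne_of_ne (Ne.symm hab) (Ne.symm hcb)]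
    exact (not_congr key).symm
  rw [← _root_.map_mul, plift_trans S T U hS hT hU (Equiv.swap b a) (Equiv.swap a c)
    (mem_swap_iff hSc hTc) (mem_swap_iff hTc hUc)]
  have hag : ∀ x ∈ S, ((Equiv.swap b a).trans (Equiv.swap a c)) x =
      ((Equiv.swap a c).trans (Equiv.swap b c)) x := by
    intro x hx
    have hxb : x ≠ b := (mem_iff_ne hSc x).mp hx
    simp only [Equiv.trans_apply]
    by_cases hxa : x = a
    · subst hxa
      rw [Equiv.swap_apply_right, Equiv.swap_apply_of_ne_of_ne (Ne.symm hab) (Ne.symm hcb),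
        Equiv.swap_apply_left, Equiv.swap_apply_right]
    · by_cases hxc : x = c
      · subst hxc
        rw [Equiv.swap_apply_of_ne_of_ne hxb hca, Equiv.swap_apply_right,
          Equiv.swap_apply_of_ne_of_ne hab (Ne.symm hca)]
      · rw [Equiv.swap_apply_of_ne_of_ne hxb hxa,
          Equiv.swap_apply_of_ne_of_ne hxa hxc,
          Equiv.swap_apply_of_ne_of_ne hxb hxc]
  rw [plift_congr S U hS hU _ ((Equiv.swap a c).trans (Equiv.swap b c)) _
    (fun x => (hmemτ x).trans (mem_swap_iff hSc hUc _)) hag]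
  rw [← plift_trans S S U hS hS hU (Equiv.swap a c) (Equiv.swap b c) hmemτ
    (mem_swap_iff hSc hUc)]
  rw [_root_.map_mul]
  rw [sign_plift_swap S hS a c ((mem_iff_ne hSc a).mpr hab) ((mem_iff_ne hSc c).mpr hcb)
    (Ne.symm hca) hmemτ]
  exact mul_neg_one _

end Sign

section Helpers

lemma units_cast_pm (u : ℤˣ) : ((u : ℤ) : ℝ) = 1 ∨ ((u : ℤ) : ℝ) = -1 := by
  rcases Int.units_eq_one_or u with h | h <;> rw [h] <;> norm_num

lemma mul_mul_diag_apply {ι : Type*} [Fintype ι] [DecidableEq ι] (D B : Matrix ι ι ℝ)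
    (hD : D.IsDiag) (i j : ι) : (D * B * D) i j = D i i * B i j * D j j := by
  rw [Matrix.mul_apply, Finset.sum_eq_single j]
  · rw [Matrix.mul_apply, Finset.sum_eq_single i]
    · intro k _ hk
      rw [hD (Ne.symm hk), zero_mul]
    · intro h
      exact absurd (Finset.mem_univ _) h
  · intro k _ hk
    rw [hD hk, mul_zero]
  · intro h
    exact absurd (Finset.mem_univ _) h

end Helpers

theorem stmt1 {n : ℕ} (hn : 2 ≤ n) (A : Matrix (Fin n) (Fin n) ℝ)
    (hA : IsSignedMatrix A) (hconn : (signedAdjGraph A).Connected) :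
    IsBalancedMatrix (extPow A (n - 1)) ↔
      ∃ D : Matrix (Fin n) (Fin n) ℝ, D.IsDiag ∧ (∀ i, D i i = 1 ∨ D i i = -1) ∧
        D * A * D = Matrix.of fun i j => -|A i j| := by
  obtain ⟨hsymm, hdiag, hentries⟩ := hA
  have hcard : ∀ S : {S : Finset (Fin n) // S.card = n - 1}, ∃ a, (S.1)ᶜ = {a} := by
    intro S
    rw [← Finset.card_eq_one, Finset.card_compl, S.2, Fintype.card_fin]
    omega
  choose m hm using hcard
  have hcardE : ∀ i : Fin n, (Finset.univ.erase i).card = n - 1 := by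
    intro i
    rw [Finset.card_erase_of_mem (Finset.mem_univ i), Finset.card_univ, Fintype.card_fin]
  have hmiff : ∀ (S : {S : Finset (Fin n) // S.card = n - 1}) (x : Fin n),
      x ∈ S.1 ↔ x ≠ m S := fun S x => mem_iff_ne (hm S) x
  have hmSof : ∀ i : Fin n, m ⟨Finset.univ.erase i, hcardE i⟩ = i := by
    intro i
    have h1 := hmiff ⟨Finset.univ.erase i, hcardE i⟩ i
    simp only [Finset.mem_erase] at h1
    by_contra hc
    exact (h1.mpr (Ne.symm hc)).1 rfl
  have hSofinj : ∀ i j : Fin n, i ≠ j →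
      (⟨Finset.univ.erase i, hcardE i⟩ : {S : Finset (Fin n) // S.card = n - 1}) ≠
        ⟨Finset.univ.erase j, hcardE j⟩ := by
    intro i j hij hc
    exact hij (by rw [← hmSof i, ← hmSof j, hc])
  -- The sign cocycle
  obtain ⟨ε, hεval, hεpm, hεsymm, hεcoc⟩ :
      ∃ ε : {S : Finset (Fin n) // S.card = n - 1} →
        {S : Finset (Fin n) // S.card = n - 1} → ℝ,
      (∀ S T, S ≠ T → extPow A (n - 1) S T = ε S T * A (m T) (m S)) ∧
      (∀ S T, ε S T = 1 ∨ ε S T = -1) ∧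
      (∀ S T, ε S T * ε T S = 1) ∧
      (∀ S T U, S ≠ T → S ≠ U → T ≠ U → ε T U * ε S T = -ε S U) := by
    refine ⟨fun S T => ((Equiv.Perm.sign (plift S.1 T.1 S.2 T.2
      (Equiv.swap (m S) (m T)) (mem_swap_iff (hm S) (hm T))) : ℤ) : ℝ), ?_, ?_, ?_, ?_⟩
    · intro S T hST
      exact extPow_offdiag A S T (m T) (m S) (hm S) (hm T) (fun h => hST (Subtype.ext h))
    · intro S T
      exact units_cast_pm _
    · intro S T
      have h := sign_symm_plift S.1 T.1 S.2 T.2 (m T) (m S) (hm S) (hm T)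
      have h2 := congrArg (fun u : ℤˣ => ((u : ℤ) : ℝ)) h
      simp only [Units.val_mul, Int.cast_mul, Units.val_one, Int.cast_one] at h2
      rw [mul_comm]
      exact h2
    · intro S T U h1 h2 h3
      have h := sign_cocycle_plift S.1 T.1 U.1 S.2 T.2 U.2 (m T) (m S) (m U)
        (hm S) (hm T) (hm U) (fun h => h1 (Subtype.ext h))
        (fun h => h2 (Subtype.ext h)) (fun h => h3 (Subtype.ext h))
      have h2' := congrArg (fun u : ℤˣ => ((u : ℤ) : ℝ)) h
      simp only [Units.val_mul, Int.cast_mul, Units.val_neg, Int.cast_neg] at h2'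
      exact h2'
  have hεsq : ∀ S T, ε S T * ε S T = 1 := by
    intro S T
    rcases hεpm S T with h | h <;> rw [h] <;> norm_num
  have hεne : ∀ S T, ε S T ≠ 0 := by
    intro S T
    rcases hεpm S T with h | h <;> rw [h] <;> norm_num
  have hεcomm : ∀ S T, ε T S = ε S T := by
    intro S T
    exact mul_left_cancel₀ (hεne S T) ((hεsymm S T).trans (hεsq S T).symm)
  -- the potential δ
  have h0n : 0 < n := by omega
  obtain ⟨δ, hδpm, hδkey⟩ :
      ∃ δ : {S : Finset (Fin n) // S.card = n - 1} → ℝ,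
      (∀ S, δ S = 1 ∨ δ S = -1) ∧
      (∀ S T, S ≠ T → ε S T = -(δ S * δ T)) := by
    set T₀ : {S : Finset (Fin n) // S.card = n - 1} :=
      ⟨Finset.univ.erase ⟨0, h0n⟩, hcardE ⟨0, h0n⟩⟩ with hT₀
    refine ⟨fun S => if S = T₀ then 1 else -ε S T₀, ?_, ?_⟩
    · intro S
      beta_reduce
      by_cases h : S = T₀
      · rw [if_pos h]; left; rfl
      · rw [if_neg h]
        rcases hεpm S T₀ with h1 | h1 <;> rw [h1] <;> norm_num
    · intro S T hST
      beta_reduce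
      by_cases hS0 : S = T₀
      · have hT0 : T ≠ T₀ := fun h => hST (hS0.trans h.symm)
        rw [if_pos hS0, if_neg hT0, hS0, ← hεcomm T T₀]
        ring
      · by_cases hT0 : T = T₀
        · rw [if_neg hS0, if_pos hT0, hT0]
          ring
        · rw [if_neg hS0, if_neg hT0]
          have hc := hεcoc S T T₀ hST hS0 hT0
          linear_combination (ε T T₀) * hc - (ε S T) * hεsq T T₀
  have hδsq : ∀ S, δ S * δ S = 1 := by
    intro S
    rcases hδpm S with h | h <;> rw [h] <;> norm_num
  have hBdiag : ∀ S, extPow A (n - 1) S S = 0 := fun S => extPow_diag A hdiag S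
  have habs : ∀ S T (x : ℝ), |ε S T * x| = |x| := by
    intro S T x
    rw [abs_mul]
    rcases hεpm S T with h | h <;> rw [h] <;> simp
  constructor
  · rintro ⟨D, hDdiag, hDpm, hDeq⟩
    refine ⟨Matrix.diagonal (fun i => D ⟨Finset.univ.erase i, hcardE i⟩
        ⟨Finset.univ.erase i, hcardE i⟩ * δ ⟨Finset.univ.erase i, hcardE i⟩),
      Matrix.isDiag_diagonal _, ?_, ?_⟩
    · intro i
      rw [Matrix.diagonal_apply_eq]
      rcases hDpm ⟨Finset.univ.erase i, hcardE i⟩ with h1 | h1 <;>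
        rcases hδpm ⟨Finset.univ.erase i, hcardE i⟩ with h2 | h2 <;>
        rw [h1, h2] <;> norm_num
    · ext i j
      rw [mul_mul_diag_apply _ _ (Matrix.isDiag_diagonal _) i j,
        Matrix.diagonal_apply_eq, Matrix.diagonal_apply_eq, Matrix.of_apply]
      by_cases hij : i = j
      · subst hij
        rw [hdiag i]
        simp
      · have hST : (⟨Finset.univ.erase j, hcardE j⟩ :
            {S : Finset (Fin n) // S.card = n - 1}) ≠ ⟨Finset.univ.erase i, hcardE i⟩ :=
          hSofinj j i (Ne.symm hij)
        have hb := congrFun (congrFun hDeq ⟨Finset.univ.erase j, hcardE j⟩)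
          ⟨Finset.univ.erase i, hcardE i⟩
        rw [mul_mul_diag_apply D _ hDdiag, Matrix.of_apply, hεval _ _ hST,
          hmSof, hmSof, habs] at hb
        have hkey' := hδkey _ _ hST
        rw [hkey'] at hb
        linear_combination -hb
  · rintro ⟨D, hDdiag, hDpm, hDeq⟩
    refine ⟨Matrix.diagonal (fun S => D (m S) (m S) * δ S),
      Matrix.isDiag_diagonal _, ?_, ?_⟩
    · intro S
      rw [Matrix.diagonal_apply_eq]
      rcases hDpm (m S) with h1 | h1 <;> rcases hδpm S with h2 | h2 <;>
        rw [h1, h2] <;> norm_num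
    · ext S T
      rw [mul_mul_diag_apply _ _ (Matrix.isDiag_diagonal _) S T,
        Matrix.diagonal_apply_eq, Matrix.diagonal_apply_eq, Matrix.of_apply]
      by_cases hST : S = T
      · subst hST
        rw [hBdiag S]
        simp
      · rw [hεval S T hST, habs, hδkey S T hST]
        have hb := congrFun (congrFun hDeq (m T)) (m S)
        rw [mul_mul_diag_apply D A hDdiag, Matrix.of_apply] at hb
        have h1 := hδsq S
        have h2 := hδsq T
        linear_combination (-(δ S * δ S * (δ T * δ T))) * hb +
          (|A (m T) (m S)| * (δ S * δ S)) * h2 + |A (m T) (m S)| * h1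
end

section
/- Let A be a signed graph on n vertices, let 1 ≤ k ≤ n−1, and let r and r' be two linear orders on Fin n. Then the exterior k-th powers of A computed with respect to r and with respect to r' are switching equivalent: there exists a diagonal matrix D, indexed by the k-element subsets of Fin n with all diagonal entries ±1, such that (Alt^{r'}_{n,k})ᵀ * A^{□k} * Alt^{r'}_{n,k} = D * ((Alt^{r}_{n,k})ᵀ * A^{□k} * Alt^{r}_{n,k}) * D. -/
open Matrix Finset

noncomputable def permOf {n k : ℕ} (r r' : LinearOrder (Fin n)) (S : Finset (Fin n))
    (h : S.card = k) : Equiv.Perm (Fin k) :=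
  (@Finset.orderIsoOfFin (Fin n) r' S k h).toEquiv.trans
    (@Finset.orderIsoOfFin (Fin n) r S k h).toEquiv.symm

lemma enumOf_permOf {n k : ℕ} (r r' : LinearOrder (Fin n)) (S : Finset (Fin n))
    (h : S.card = k) : enumOf r' S h = enumOf r S h ∘ permOf r r' S h := by
  funext i
  simp [enumOf, permOf]

lemma altOf_eq {n k : ℕ} (r r' : LinearOrder (Fin n)) (u : Fin k → Fin n)
    (S : {S : Finset (Fin n) // S.card = k}) :
    altOf k r' u S = altOf k r u S *
      ((Equiv.Perm.sign (permOf r r' S.1 S.2) : ℤ) : ℝ) := by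
  set σ := permOf r r' S.1 S.2 with hσ
  have hs : ((Equiv.Perm.sign σ : ℤ) : ℝ) = 1 ∨ ((Equiv.Perm.sign σ : ℤ) : ℝ) = -1 := by
    rcases Int.units_eq_one_or (Equiv.Perm.sign σ) with h | h <;> simp [h]
  have hs2 : ((Equiv.Perm.sign σ : ℤ) : ℝ) * ((Equiv.Perm.sign σ : ℤ) : ℝ) = 1 := by
    rcases hs with h | h <;> rw [h] <;> norm_num
  simp only [altOf, Matrix.of_apply, enumOf_permOf r r' S.1 S.2]
  rw [mul_comm (_ * _), ← mul_assoc, mul_comm (((Equiv.Perm.sign σ : ℤ) : ℝ)), mul_assoc]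
  congr 1
  rw [Finset.mul_sum]
  refine Fintype.sum_equiv (Equiv.mulLeft σ) _ _ fun π => ?_
  have hcomp : (enumOf r S.1 S.2 ∘ ⇑σ) ∘ ⇑π = enumOf r S.1 S.2 ∘ ⇑(σ * π) := rfl
  rw [hcomp, Equiv.coe_mulLeft]
  split_ifs with h
  · show ((Equiv.Perm.sign π : ℤ) : ℝ) =
      ((Equiv.Perm.sign σ : ℤ) : ℝ) * ((Equiv.Perm.sign (σ * π) : ℤ) : ℝ)
    rw [_root_.map_mul Equiv.Perm.sign σ π]
    push_cast
    rw [← mul_assoc, hs2, one_mul]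
  · ring

theorem stmt6 {n k : ℕ} (hk : 1 ≤ k) (hkn : k ≤ n - 1)
    (A : Matrix (Fin n) (Fin n) ℝ) (hA : IsSignedMatrix A)
    (r r' : LinearOrder (Fin n)) :
    ∃ D : Matrix {S : Finset (Fin n) // S.card = k} {S : Finset (Fin n) // S.card = k} ℝ,
      D.IsDiag ∧ (∀ S, D S S = 1 ∨ D S S = -1) ∧
      (altOf k r')ᵀ * cartPow A k * altOf k r' =
        D * ((altOf k r)ᵀ * cartPow A k * altOf k r) * D := by
  classical
  set d : {S : Finset (Fin n) // S.card = k} → ℝ :=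
    fun S => ((Equiv.Perm.sign (permOf r r' S.1 S.2) : ℤ) : ℝ) with hd
  refine ⟨Matrix.diagonal d, Matrix.isDiag_diagonal d, ?_, ?_⟩
  · intro S
    simp only [Matrix.diagonal_apply_eq, hd]
    rcases Int.units_eq_one_or (Equiv.Perm.sign (permOf r r' S.1 S.2)) with h | h <;>
      simp [h]
  · have key : altOf k r' = altOf k r * Matrix.diagonal d := by
      ext u S
      rw [Matrix.mul_diagonal]
      exact altOf_eq r r' u S
    rw [key, Matrix.transpose_mul, Matrix.diagonal_transpose]
    simp only [Matrix.mul_assoc]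
end

section
/- Let A₁ and A₂ be signed graphs on n vertices that are switching equivalent, i.e. A₂ = D * A₁ * D for some diagonal matrix D with all diagonal entries ±1. Then for every integer k with 1 ≤ k ≤ n−1, the exterior k-th powers are switching equivalent: ∧^k A₂ = D̂ * (∧^k A₁) * D̂, where D̂ is the diagonal matrix indexed by k-element subsets of Fin n whose diagonal entry at S is ∏_{x ∈ S} D(x,x). -/
open Matrix Finset

lemma cartPow_switch {n k : ℕ} (A D : Matrix (Fin n) (Fin n) ℝ) (hD : D.IsDiag)
    (hD1 : ∀ i, D i i = 1 ∨ D i i = -1) (u v : Fin k → Fin n) :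
    cartPow (D * A * D) k u v =
      (∏ j, D (u j) (u j)) * (∏ j, D (v j) (v j)) * cartPow A k u v := by
  have hDsq : ∀ a : Fin n, D a a * D a a = 1 := by
    intro a; rcases hD1 a with h | h <;> rw [h] <;> norm_num
  have hDdiag : D = Matrix.diagonal (fun i => D i i) := by
    ext i j
    by_cases h : i = j
    · subst h; simp
    · simp [Matrix.diagonal_apply_ne _ h, hD h]
  have hent : ∀ a b, (D * A * D) a b = D a a * A a b * D b b := by
    intro a b
    conv_lhs => rw [hDdiag]
    rw [Matrix.mul_diagonal, Matrix.diagonal_mul]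
  unfold cartPow
  simp only [Matrix.of_apply]
  rw [Finset.mul_sum]
  apply Finset.sum_congr rfl
  intro i _
  rw [hent]
  by_cases hP : ∀ j ∈ Finset.univ.erase i, u j = v j
  · have hP1 : (∏ j ∈ Finset.univ.erase i, (if u j = v j then (1:ℝ) else 0)) = 1 :=
      Finset.prod_eq_one (fun j hj => by rw [if_pos (hP j hj)])
    have hprod : (∏ j, D (u j) (u j)) * (∏ j, D (v j) (v j))
        = D (u i) (u i) * D (v i) (v i) := by
      rw [← Finset.prod_mul_distrib,
        ← Finset.mul_prod_erase _ _ (Finset.mem_univ i),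
        Finset.prod_eq_one (fun j hj => by rw [hP j hj]; exact hDsq _), mul_one]
    rw [hP1, mul_one, mul_one, hprod]; ring
  · push_neg at hP
    obtain ⟨j, hj, hne⟩ := hP
    have hP0 : (∏ j ∈ Finset.univ.erase i, (if u j = v j then (1:ℝ) else 0)) = 0 :=
      Finset.prod_eq_zero hj (by rw [if_neg hne])
    rw [hP0]; ring

lemma alt_prod {n k : ℕ} (D : Matrix (Fin n) (Fin n) ℝ) (u : Fin k → Fin n)
    (S : {S : Finset (Fin n) // S.card = k}) (h : alt n k u S ≠ 0) :
    ∏ j, D (u j) (u j) = ∏ x ∈ S.1, D x x := by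
  have hex : ∃ π : Equiv.Perm (Fin k), u = enumOf inferInstance S.1 S.2 ∘ π := by
    by_contra hc
    push_neg at hc
    apply h
    unfold alt altOf
    simp only [Matrix.of_apply]
    rw [Finset.sum_eq_zero (fun π _ => by rw [if_neg (hc π)]), mul_zero]
  obtain ⟨π, hπ⟩ := hex
  subst hπ
  have h1 : ∀ j, (enumOf inferInstance S.1 S.2 ∘ π) j
      = ((S.1.orderIsoOfFin S.2) (π j) : Fin n) := fun j => rfl
  simp only [h1]
  rw [Equiv.prod_comp π (fun j => D ((S.1.orderIsoOfFin S.2) j : Fin n)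
      ((S.1.orderIsoOfFin S.2) j : Fin n))]
  rw [← Finset.prod_coe_sort S.1 (fun x => D x x)]
  exact Equiv.prod_comp (S.1.orderIsoOfFin S.2).toEquiv
    (fun x : S.1 => D (x : Fin n) (x : Fin n))

theorem stmt8 {n k : ℕ} (hk : 1 ≤ k) (hkn : k ≤ n - 1)
    (A₁ A₂ : Matrix (Fin n) (Fin n) ℝ) (hA₁ : IsSignedMatrix A₁) (hA₂ : IsSignedMatrix A₂)
    (D : Matrix (Fin n) (Fin n) ℝ) (hD : D.IsDiag) (hD1 : ∀ i, D i i = 1 ∨ D i i = -1)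
    (hsw : A₂ = D * A₁ * D) :
    extPow A₂ k =
      Matrix.diagonal (fun S : {S : Finset (Fin n) // S.card = k} => ∏ x ∈ S.1, D x x)
        * extPow A₁ k *
      Matrix.diagonal (fun S : {S : Finset (Fin n) // S.card = k} => ∏ x ∈ S.1, D x x) := by
  subst hsw
  ext S T
  simp only [Matrix.mul_diagonal, Matrix.diagonal_mul]
  unfold extPow
  rw [Matrix.mul_apply, Matrix.mul_apply, Finset.mul_sum, Finset.sum_mul]
  apply Finset.sum_congr rfl
  intro v _
  rw [Matrix.mul_apply, Finset.sum_mul, Matrix.mul_apply, Finset.sum_mul,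
    Finset.mul_sum, Finset.sum_mul]
  apply Finset.sum_congr rfl
  intro u _
  simp only [Matrix.transpose_apply]
  by_cases hu : alt n k u S = 0
  · rw [hu]; ring
  by_cases hv : alt n k v T = 0
  · rw [hv]; ring
  rw [cartPow_switch A₁ D hD hD1, alt_prod D u S hu, alt_prod D v T hv]
  ring
end

section
/- Let 1 ≤ k ≤ n and let D be a diagonal n×n real matrix with all diagonal entries ±1. Let D̂ be the diagonal matrix indexed by k-element subsets of Fin n with diagonal entry ∏_{x ∈ S} D(x,x) at S, and let D^{⊗k} be the diagonal matrix indexed by tuples u : Fin k → Fin n with diagonal entry ∏_{i : Fin k} D(u i, u i) at u. Then Alt_{n,k} * D̂ = D^{⊗k} * Alt_{n,k}. -/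
open Matrix Finset

theorem stmt9 {n k : ℕ} (hk : 1 ≤ k) (hkn : k ≤ n)
    (D : Matrix (Fin n) (Fin n) ℝ) (hD : D.IsDiag) (hD1 : ∀ i, D i i = 1 ∨ D i i = -1) :
    alt n k *
        Matrix.diagonal (fun S : {S : Finset (Fin n) // S.card = k} => ∏ x ∈ S.1, D x x) =
      Matrix.diagonal (fun u : Fin k → Fin n => ∏ i : Fin k, D (u i) (u i)) * alt n k := by
  ext u S
  rw [Matrix.mul_diagonal, Matrix.diagonal_mul]
  simp only [alt, altOf, Matrix.of_apply]
  conv_lhs => rw [mul_assoc]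
  conv_rhs => rw [mul_left_comm]
  refine congrArg (((Real.sqrt (Nat.factorial k))⁻¹) * ·) ?_
  rw [Finset.sum_mul, Finset.mul_sum]
  refine Finset.sum_congr rfl fun π _ => ?_
  split_ifs with h
  · rw [mul_comm ((∏ i : Fin k, D (u i) (u i)))]
    congr 1
    subst h
    have h1 : ∀ f : Fin n → ℝ,
        ∏ i : Fin k, f (enumOf inferInstance S.1 S.2 i) = ∏ x ∈ S.1, f x := by
      intro f
      rw [← Finset.prod_coe_sort S.1 f]
      exact Equiv.prod_comp (Finset.orderIsoOfFin S.1 S.2).toEquiv (fun x => f x)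
    calc ∏ x ∈ S.1, D x x = ∏ i : Fin k, D (enumOf inferInstance S.1 S.2 i)
            (enumOf inferInstance S.1 S.2 i) := (h1 (fun x => D x x)).symm
      _ = ∏ i : Fin k, D ((enumOf inferInstance S.1 S.2 ∘ π) i)
            ((enumOf inferInstance S.1 S.2 ∘ π) i) :=
          (Equiv.prod_comp π (fun i => D (enumOf inferInstance S.1 S.2 i)
            (enumOf inferInstance S.1 S.2 i))).symm
  · simp
end

section
/- Let G be a simple graph on n ≥ 3 vertices with {0,1}-adjacency matrix A, viewed as a signed graph with all edges positive, and let Σ' = ∧^2 A be its exterior square, a signed graph indexed by 2-element subsets of Fin n. Then the graph on ordered pairs {(a,b) ∈ Fin n × Fin n : a ≠ b}, with (a,b) adjacent to (c,d) iff (a = c and A(b,d) = 1) or (b = d and A(a,c) = 1), is isomorphic to the double cover of Σ': the graph on pairs (S, ε) with S a 2-element subset of Fin n and ε ∈ {−1, +1}, where (S, ε) is adjacent to (T, δ) iff Σ'(S,T) ≠ 0 and δ = Σ'(S,T) · ε. -/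
open Matrix Finset

section Aux

variable {n : ℕ}

private lemma collapse10 {α β : Type*} [Fintype α] [DecidableEq α] [Fintype β]
    (c : ℝ) (g : β → α) (s : β → ℝ) (f : α → ℝ) :
    ∑ u : α, (c * ∑ π : β, if u = g π then s π else 0) * f u
      = c * ∑ π : β, s π * f (g π) := by
  simp_rw [mul_assoc, ← Finset.mul_sum]
  congr 1
  simp_rw [Finset.sum_mul, ite_mul, zero_mul]
  rw [Finset.sum_comm]
  simp

private lemma cartPow_two10 (A : Matrix (Fin n) (Fin n) ℝ) (u v : Fin 2 → Fin n) :
    cartPow A 2 u v = A (u 0) (v 0) * (if u 1 = v 1 then 1 else 0)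
      + A (u 1) (v 1) * (if u 0 = v 0 then 1 else 0) := by
  simp [cartPow, Fin.sum_univ_two, show (univ.erase (0:Fin 2)) = {1} from by decide,
    show (univ.erase (1:Fin 2)) = {0} from by decide]

private def Ff10 (A : Matrix (Fin n) (Fin n) ℝ) (a b c d : Fin n) : ℝ :=
  (if b = d then A a c else 0) + (if a = c then A b d else 0)
  - (if b = c then A a d else 0) - (if a = d then A b c else 0)

private lemma extPow_two_apply10 (A : Matrix (Fin n) (Fin n) ℝ)
    (S T : {S : Finset (Fin n) // S.card = 2}) :
    extPow A 2 S T = Ff10 A (enumOf inferInstance S.1 S.2 0) (enumOf inferInstance S.1 S.2 1)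
      (enumOf inferInstance T.1 T.2 0) (enumOf inferInstance T.1 T.2 1) := by
  set eS := enumOf inferInstance S.1 S.2
  set eT := enumOf inferInstance T.1 T.2
  have h1 : extPow A 2 S T = ∑ v, (∑ u, (alt n 2) u S * cartPow A 2 u v) * (alt n 2) v T := by
    simp [extPow, Matrix.mul_apply, Matrix.transpose_apply]
  rw [h1]
  have h2 : ∀ v, (∑ u, (alt n 2) u S * cartPow A 2 u v)
      = (Real.sqrt (Nat.factorial 2))⁻¹ *
        ∑ π : Equiv.Perm (Fin 2), ((Equiv.Perm.sign π : ℤ) : ℝ) * cartPow A 2 (eS ∘ π) v := by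
    intro v
    exact collapse10 _ _ _ _
  simp_rw [h2]
  have h3 : ∑ v, ((Real.sqrt (Nat.factorial 2))⁻¹ *
        ∑ π : Equiv.Perm (Fin 2), ((Equiv.Perm.sign π : ℤ) : ℝ) * cartPow A 2 (eS ∘ π) v)
        * (alt n 2) v T
      = ∑ v, ((alt n 2) v T) * ((Real.sqrt (Nat.factorial 2))⁻¹ *
        ∑ π : Equiv.Perm (Fin 2), ((Equiv.Perm.sign π : ℤ) : ℝ) * cartPow A 2 (eS ∘ π) v) := by
    simp_rw [mul_comm]
  rw [h3]
  rw [show (alt n 2 : Matrix _ _ ℝ) = altOf 2 inferInstance from rfl]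
  have h4 : ∑ v, (altOf 2 inferInstance) v T * ((Real.sqrt (Nat.factorial 2))⁻¹ *
        ∑ π : Equiv.Perm (Fin 2), ((Equiv.Perm.sign π : ℤ) : ℝ) * cartPow A 2 (eS ∘ π) v)
      = (Real.sqrt (Nat.factorial 2))⁻¹ * ∑ σ : Equiv.Perm (Fin 2),
          ((Equiv.Perm.sign σ : ℤ) : ℝ) * ((Real.sqrt (Nat.factorial 2))⁻¹ *
        ∑ π : Equiv.Perm (Fin 2), ((Equiv.Perm.sign π : ℤ) : ℝ) * cartPow A 2 (eS ∘ π) (eT ∘ σ)) := by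
    have := collapse10 (α := Fin 2 → Fin n) (β := Equiv.Perm (Fin 2))
      ((Real.sqrt (Nat.factorial 2))⁻¹) (fun σ => eT ∘ σ)
      (fun σ => ((Equiv.Perm.sign σ : ℤ) : ℝ))
      (fun v => (Real.sqrt (Nat.factorial 2))⁻¹ *
        ∑ π : Equiv.Perm (Fin 2), ((Equiv.Perm.sign π : ℤ) : ℝ) * cartPow A 2 (eS ∘ π) v)
    simpa [altOf, mul_comm] using this
  rw [h4]
  have hq : (Real.sqrt (Nat.factorial 2))⁻¹ * (Real.sqrt (Nat.factorial 2))⁻¹ = 1/2 := by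
    rw [← mul_inv, Real.mul_self_sqrt (by positivity)]
    norm_num [Nat.factorial]
  have huniv : (univ : Finset (Equiv.Perm (Fin 2))) = {1, Equiv.swap 0 1} := by decide
  rw [huniv, Finset.sum_pair (by decide), Finset.sum_pair (by decide),
    Finset.sum_pair (by decide)]
  simp only [Equiv.Perm.sign_one, Equiv.Perm.sign_swap (by decide : (0:Fin 2) ≠ 1), Units.val_one,
    Units.val_neg, Int.cast_one, Int.cast_neg, Equiv.Perm.coe_one, Function.comp_id,
    cartPow_two10]
  simp only [Function.comp_apply, Equiv.swap_apply_left, Equiv.swap_apply_right,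
    mul_ite, mul_one, mul_zero, Ff10]
  linear_combination (2 * ((if eS 1 = eT 1 then A (eS 0) (eT 0) else 0)
    + (if eS 0 = eT 0 then A (eS 1) (eT 1) else 0)
    - (if eS 1 = eT 0 then A (eS 0) (eT 1) else 0)
    - (if eS 0 = eT 1 then A (eS 1) (eT 0) else 0))) * hq

private lemma enumOf_eq_emb10 {k : ℕ} (S : Finset (Fin n)) (h : S.card = k) (i : Fin k) :
    enumOf inferInstance S h i = S.orderEmbOfFin h i := rfl

private lemma enumOf_lt10 (S : Finset (Fin n)) (h : S.card = 2) :
    enumOf inferInstance S h 0 < enumOf inferInstance S h 1 := by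
  rw [enumOf_eq_emb10, enumOf_eq_emb10]
  exact (S.orderEmbOfFin h).strictMono (by decide : (0 : Fin 2) < 1)

private lemma enumOf_mem10 {k : ℕ} (S : Finset (Fin n)) (h : S.card = k) (i : Fin k) :
    enumOf inferInstance S h i ∈ S := by
  rw [enumOf_eq_emb10]; exact S.orderEmbOfFin_mem h i

private lemma enumOf_pair10 {a b : Fin n} (hab : a < b) (S : Finset (Fin n))
    (hS : S = {a, b}) (h : S.card = 2) (i : Fin 2) :
    enumOf inferInstance S h i = ![a, b] i := by
  subst hS
  have hmem : ∀ x : Fin 2, ![a, b] x ∈ ({a, b} : Finset (Fin n)) := by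
    intro x; fin_cases x <;> simp
  have hmono : StrictMono ![a, b] := by
    intro i j hij
    fin_cases i <;> fin_cases j <;>
      first
        | exact absurd hij (by decide)
        | simpa using hab
  rw [enumOf_eq_emb10, ← Finset.orderEmbOfFin_unique h hmem hmono]

private lemma key10 (A : Matrix (Fin n) (Fin n) ℝ) (hdiag : ∀ i, A i i = 0)
    (h01 : ∀ i j, A i j = 0 ∨ A i j = 1) (x y z w : Fin n) (hxy : x ≠ y) (hzw : z ≠ w) :
    Ff10 A x y z w = 1 ↔ ((x = z ∧ A y w = 1) ∨ (y = w ∧ A x z = 1)) := by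
  unfold Ff10
  split_ifs with hbd hac hbc had hbc had hac hbc had hbc had <;>
    simp_all <;>
    (rcases h01 x z with h1 | h1 <;> rcases h01 y w with h2 | h2 <;>
      rcases h01 x w with h3 | h3 <;> rcases h01 y z with h4 | h4 <;>
      simp_all <;> norm_num)

private noncomputable def pairEquiv10 (n : ℕ) :
    {p : Fin n × Fin n // p.1 ≠ p.2} ≃
      ({S : Finset (Fin n) // S.card = 2} × {x : ℝ // x = 1 ∨ x = -1}) where
  toFun p := (⟨{p.1.1, p.1.2}, Finset.card_pair p.2⟩,
    if p.1.1 < p.1.2 then ⟨1, Or.inl rfl⟩ else ⟨-1, Or.inr rfl⟩)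
  invFun Sε :=
    if (Sε.2 : ℝ) = 1 then
      ⟨(enumOf inferInstance Sε.1.1 Sε.1.2 0, enumOf inferInstance Sε.1.1 Sε.1.2 1),
        ne_of_lt (enumOf_lt10 Sε.1.1 Sε.1.2)⟩
    else
      ⟨(enumOf inferInstance Sε.1.1 Sε.1.2 1, enumOf inferInstance Sε.1.1 Sε.1.2 0),
        (ne_of_lt (enumOf_lt10 Sε.1.1 Sε.1.2)).symm⟩
  left_inv := by
    rintro ⟨⟨x, y⟩, hxy⟩
    have hxy' : x ≠ y := hxy
    by_cases hlt : x < y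
    · simp only [hlt, if_true]
      exact Subtype.ext (Prod.ext
        ((enumOf_pair10 hlt {x, y} rfl (Finset.card_pair hxy') 0).trans (by simp))
        ((enumOf_pair10 hlt {x, y} rfl (Finset.card_pair hxy') 1).trans (by simp)))
    · have hlt' : y < x := lt_of_le_of_ne (not_lt.1 hlt) (fun h => hxy' h.symm)
      simp only [hlt, if_false]
      rw [if_neg (by norm_num : ¬((-1:ℝ) = 1))]
      exact Subtype.ext (Prod.ext
        ((enumOf_pair10 hlt' {x, y} (Finset.pair_comm x y) (Finset.card_pair hxy') 1).trans
          (by simp))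
        ((enumOf_pair10 hlt' {x, y} (Finset.pair_comm x y) (Finset.card_pair hxy') 0).trans
          (by simp)))
  right_inv := by
    rintro ⟨⟨S, hS⟩, ⟨ε, hε⟩⟩
    have hab := enumOf_lt10 S hS
    have h0 := enumOf_mem10 S hS 0
    have h1 := enumOf_mem10 S hS 1
    have hset : ({enumOf inferInstance S hS 0, enumOf inferInstance S hS 1} :
        Finset (Fin n)) = S := by
      apply Finset.eq_of_subset_of_card_le
      · intro t ht
        simp only [Finset.mem_insert, Finset.mem_singleton] at ht
        rcases ht with rfl | rfl
        exacts [h0, h1]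
      · rw [hS, Finset.card_pair (ne_of_lt hab)]
    rcases hε with rfl | rfl
    · rw [show ((⟨(⟨S, hS⟩ : {S : Finset (Fin n) // S.card = 2}), 
        (⟨1, Or.inl rfl⟩ : {x : ℝ // x = 1 ∨ x = -1})⟩ :
          {S : Finset (Fin n) // S.card = 2} × {x : ℝ // x = 1 ∨ x = -1}) : _) = _ from rfl]
      dsimp only
      rw [if_pos rfl]
      refine Prod.ext (Subtype.ext ?_) ?_
      · exact hset
      · show (if enumOf inferInstance S hS 0 < enumOf inferInstance S hS 1 then
            (⟨1, Or.inl rfl⟩ : {x : ℝ // x = 1 ∨ x = -1}) else ⟨-1, Or.inr rfl⟩) = _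
        rw [if_pos hab]
    · dsimp only
      rw [if_neg (by norm_num : ¬((-1:ℝ) = 1))]
      refine Prod.ext (Subtype.ext ?_) ?_
      · show ({enumOf inferInstance S hS 1, enumOf inferInstance S hS 0} :
            Finset (Fin n)) = S
        rw [Finset.pair_comm]; exact hset
      · show (if enumOf inferInstance S hS 1 < enumOf inferInstance S hS 0 then
            (⟨1, Or.inl rfl⟩ : {x : ℝ // x = 1 ∨ x = -1}) else ⟨-1, Or.inr rfl⟩) = _
        rw [if_neg (not_lt_of_gt hab)]
end Aux

theorem stmt10 {n : ℕ} (hn : 3 ≤ n) (A : Matrix (Fin n) (Fin n) ℝ)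
    (hsym : A.IsSymm) (hdiag : ∀ i, A i i = 0) (h01 : ∀ i j, A i j = 0 ∨ A i j = 1) :
    ∃ e : {p : Fin n × Fin n // p.1 ≠ p.2} ≃
        ({S : Finset (Fin n) // S.card = 2} × {x : ℝ // x = 1 ∨ x = -1}),
      ∀ p q : {p : Fin n × Fin n // p.1 ≠ p.2},
        ((p.1.1 = q.1.1 ∧ A p.1.2 q.1.2 = 1) ∨ (p.1.2 = q.1.2 ∧ A p.1.1 q.1.1 = 1)) ↔
          (extPow A 2 (e p).1 (e q).1 ≠ 0 ∧
            ((e q).2 : ℝ) = extPow A 2 (e p).1 (e q).1 * ((e p).2 : ℝ)) := by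
  refine ⟨pairEquiv10 n, ?_⟩
  rintro ⟨⟨x, y⟩, hxy⟩ ⟨⟨z, w⟩, hzw⟩
  simp only [pairEquiv10, Equiv.coe_fn_mk]
  rw [extPow_two_apply10]
  by_cases hp : x < y <;> by_cases hq : z < w
  · simp only [hp, hq, if_true]
    rw [enumOf_pair10 hp {x, y} rfl (Finset.card_pair hxy) 0,
      enumOf_pair10 hp {x, y} rfl (Finset.card_pair hxy) 1,
      enumOf_pair10 hq {z, w} rfl (Finset.card_pair hzw) 0,
      enumOf_pair10 hq {z, w} rfl (Finset.card_pair hzw) 1]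
    simp only [Matrix.cons_val_zero, Matrix.cons_val_one, Matrix.head_cons,
      show ((⟨1, Or.inl rfl⟩ : {x : ℝ // x = 1 ∨ x = -1}) : ℝ) = 1 from rfl,
      show ((⟨-1, Or.inr rfl⟩ : {x : ℝ // x = 1 ∨ x = -1}) : ℝ) = -1 from rfl]
    rw [← key10 A hdiag h01 x y z w hxy hzw]
    constructor
    · intro h; rw [h]; norm_num
    · rintro ⟨h1, h2⟩; linarith
  · have hq' : w < z := lt_of_le_of_ne (not_lt.1 hq) (fun h => hzw h.symm)
    simp only [hp, hq, if_true, if_false]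
    rw [enumOf_pair10 hp {x, y} rfl (Finset.card_pair hxy) 0,
      enumOf_pair10 hp {x, y} rfl (Finset.card_pair hxy) 1,
      enumOf_pair10 hq' {z, w} (Finset.pair_comm z w) (Finset.card_pair hzw) 0,
      enumOf_pair10 hq' {z, w} (Finset.pair_comm z w) (Finset.card_pair hzw) 1]
    simp only [Matrix.cons_val_zero, Matrix.cons_val_one, Matrix.head_cons,
      show ((⟨1, Or.inl rfl⟩ : {x : ℝ // x = 1 ∨ x = -1}) : ℝ) = 1 from rfl,
      show ((⟨-1, Or.inr rfl⟩ : {x : ℝ // x = 1 ∨ x = -1}) : ℝ) = -1 from rfl]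
    rw [show Ff10 A x y w z = -Ff10 A x y z w from by unfold Ff10; ring]
    rw [← key10 A hdiag h01 x y z w hxy hzw]
    constructor
    · intro h; rw [h]; norm_num
    · rintro ⟨h1, h2⟩; linarith
  · have hp' : y < x := lt_of_le_of_ne (not_lt.1 hp) (fun h => hxy h.symm)
    simp only [hp, hq, if_true, if_false]
    rw [enumOf_pair10 hp' {x, y} (Finset.pair_comm x y) (Finset.card_pair hxy) 0,
      enumOf_pair10 hp' {x, y} (Finset.pair_comm x y) (Finset.card_pair hxy) 1,
      enumOf_pair10 hq {z, w} rfl (Finset.card_pair hzw) 0,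
      enumOf_pair10 hq {z, w} rfl (Finset.card_pair hzw) 1]
    simp only [Matrix.cons_val_zero, Matrix.cons_val_one, Matrix.head_cons,
      show ((⟨1, Or.inl rfl⟩ : {x : ℝ // x = 1 ∨ x = -1}) : ℝ) = 1 from rfl,
      show ((⟨-1, Or.inr rfl⟩ : {x : ℝ // x = 1 ∨ x = -1}) : ℝ) = -1 from rfl]
    rw [show Ff10 A y x z w = -Ff10 A x y z w from by unfold Ff10; ring]
    rw [← key10 A hdiag h01 x y z w hxy hzw]
    constructor
    · intro h; rw [h]; norm_num
    · rintro ⟨h1, h2⟩; linarith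
  · have hp' : y < x := lt_of_le_of_ne (not_lt.1 hp) (fun h => hxy h.symm)
    have hq' : w < z := lt_of_le_of_ne (not_lt.1 hq) (fun h => hzw h.symm)
    simp only [hp, hq, if_false]
    rw [enumOf_pair10 hp' {x, y} (Finset.pair_comm x y) (Finset.card_pair hxy) 0,
      enumOf_pair10 hp' {x, y} (Finset.pair_comm x y) (Finset.card_pair hxy) 1,
      enumOf_pair10 hq' {z, w} (Finset.pair_comm z w) (Finset.card_pair hzw) 0,
      enumOf_pair10 hq' {z, w} (Finset.pair_comm z w) (Finset.card_pair hzw) 1]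
    simp only [Matrix.cons_val_zero, Matrix.cons_val_one, Matrix.head_cons,
      show ((⟨1, Or.inl rfl⟩ : {x : ℝ // x = 1 ∨ x = -1}) : ℝ) = 1 from rfl,
      show ((⟨-1, Or.inr rfl⟩ : {x : ℝ // x = 1 ∨ x = -1}) : ℝ) = -1 from rfl]
    rw [show Ff10 A y x w z = Ff10 A x y z w from by unfold Ff10; ring]
    rw [← key10 A hdiag h01 x y z w hxy hzw]
    constructor
    · intro h; rw [h]; norm_num
    · rintro ⟨h1, h2⟩; linarith
end

section
/- Let A be the adjacency matrix of the complete graph K_n (A(i,j) = 1 for i ≠ j and A(i,i) = 0), viewed as a signed graph, and let 1 ≤ k ≤ n−1. Then the underlying graph of ∧^k A is the Johnson graph J(n,k,k−1): for all distinct k-element subsets S, T of Fin n, (∧^k A)(S,T) ≠ 0 if and only if |S ∩ T| = k−1. -/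
open Matrix Finset

variable {n k : ℕ}

noncomputable def en (S : {S : Finset (Fin n) // S.card = k}) : Fin k → Fin n :=
  enumOf inferInstance S.1 S.2

lemma en_mem (S : {S : Finset (Fin n) // S.card = k}) (i : Fin k) : en S i ∈ S.1 :=
  (Finset.orderIsoOfFin S.1 S.2 i).2

lemma en_inj (S : {S : Finset (Fin n) // S.card = k}) : Function.Injective (en S) :=
  fun i j h => (Finset.orderIsoOfFin S.1 S.2).injective (Subtype.ext h)

lemma sum_alt_mul (S : {S : Finset (Fin n) // S.card = k}) (f : (Fin k → Fin n) → ℝ) :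
    ∑ u : Fin k → Fin n, alt n k u S * f u =
      (Real.sqrt (Nat.factorial k))⁻¹ * ∑ π : Equiv.Perm (Fin k),
        ((Equiv.Perm.sign π : ℤ) : ℝ) * f (en S ∘ π) := by
  simp only [alt, altOf, Matrix.of_apply, mul_assoc, Finset.sum_mul, ← Finset.mul_sum]
  congr 1
  rw [Finset.sum_comm]
  refine Finset.sum_congr rfl fun π _ => ?_
  simp [ite_mul, en]

lemma extPow_expand (A : Matrix (Fin n) (Fin n) ℝ) (S T : {S : Finset (Fin n) // S.card = k}) :
    extPow A k S T = (Real.sqrt (Nat.factorial k))⁻¹ * (Real.sqrt (Nat.factorial k))⁻¹ *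
      ∑ π : Equiv.Perm (Fin k), ∑ σ : Equiv.Perm (Fin k),
        ((Equiv.Perm.sign π : ℤ) : ℝ) * ((Equiv.Perm.sign σ : ℤ) : ℝ) *
          cartPow A k (en S ∘ π) (en T ∘ σ) := by
  have h1 : extPow A k S T =
      ∑ v : Fin k → Fin n, alt n k v T * ∑ u : Fin k → Fin n, alt n k u S * cartPow A k u v := by
    simp only [extPow, Matrix.mul_apply, Matrix.transpose_apply]
    exact Finset.sum_congr rfl fun v _ => mul_comm _ _
  rw [h1, sum_alt_mul T (fun v => ∑ u : Fin k → Fin n, alt n k u S * cartPow A k u v)]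
  have h2 : ∀ σ : Equiv.Perm (Fin k),
      (∑ u : Fin k → Fin n, alt n k u S * cartPow A k u (en T ∘ σ)) =
      (Real.sqrt (Nat.factorial k))⁻¹ * ∑ π : Equiv.Perm (Fin k),
        ((Equiv.Perm.sign π : ℤ) : ℝ) * cartPow A k (en S ∘ π) (en T ∘ σ) :=
    fun σ => sum_alt_mul S _
  simp only [h2]
  have h3 : (∑ π : Equiv.Perm (Fin k), ∑ σ : Equiv.Perm (Fin k),
      ((Equiv.Perm.sign π : ℤ) : ℝ) * ((Equiv.Perm.sign σ : ℤ) : ℝ) *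
        cartPow A k (en S ∘ π) (en T ∘ σ)) =
      ∑ σ : Equiv.Perm (Fin k), ∑ π : Equiv.Perm (Fin k),
      ((Equiv.Perm.sign π : ℤ) : ℝ) * ((Equiv.Perm.sign σ : ℤ) : ℝ) *
        cartPow A k (en S ∘ π) (en T ∘ σ) := Finset.sum_comm
  rw [h3]
  simp only [Finset.mul_sum]
  refine Finset.sum_congr rfl fun σ _ => ?_
  refine Finset.sum_congr rfl fun π _ => ?_
  ring

lemma cart_zero (A : Matrix (Fin n) (Fin n) ℝ) (S T : {S : Finset (Fin n) // S.card = k})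
    (hlt : (S.1 ∩ T.1).card < k - 1) (π σ : Equiv.Perm (Fin k)) :
    cartPow A k (en S ∘ π) (en T ∘ σ) = 0 := by
  simp only [cartPow, Matrix.of_apply, Function.comp_apply]
  refine Finset.sum_eq_zero fun i _ => ?_
  have hex : ∃ j ∈ Finset.univ.erase i, en S (π j) ≠ en T (σ j) := by
    by_contra h
    push_neg at h
    have hinj : Set.InjOn (fun j => en S (π j)) (Finset.univ.erase i) :=
      fun x _ y _ hxy => π.injective (en_inj S hxy)
    have hmaps : ∀ j ∈ Finset.univ.erase i, en S (π j) ∈ S.1 ∩ T.1 := by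
      intro j hj
      rw [Finset.mem_inter]
      refine ⟨en_mem S _, ?_⟩
      rw [h j hj]
      exact en_mem T (σ j)
    have hcle := Finset.card_le_card_of_injOn _ hmaps hinj
    rw [Finset.card_erase_of_mem (Finset.mem_univ i), Finset.card_univ, Fintype.card_fin] at hcle
    omega
  obtain ⟨j, hj, hne⟩ := hex
  rw [Finset.prod_eq_zero hj (by simp [hne]), mul_zero]

lemma cart_ite (A : Matrix (Fin n) (Fin n) ℝ)
    (hA : A = Matrix.of fun i j => if i = j then 0 else 1)
    (S T : {S : Finset (Fin n) // S.card = k})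
    (hST : S.1 ≠ T.1) (hcard : (S.1 ∩ T.1).card = k - 1) (hk : 1 ≤ k) :
    ∃ τ : Equiv.Perm (Fin k), ∀ π σ : Equiv.Perm (Fin k),
      cartPow A k (en S ∘ π) (en T ∘ σ) = if σ = τ * π then 1 else 0 := by
  have hScard := S.2
  have hTcard := T.2
  have h1 : (S.1 \ T.1).card = 1 := by
    have := Finset.card_sdiff_add_card_inter S.1 T.1
    omega
  have h2 : (T.1 \ S.1).card = 1 := by
    have := Finset.card_sdiff_add_card_inter T.1 S.1
    rw [Finset.inter_comm] at this
    omega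
  obtain ⟨a, ha⟩ := Finset.card_eq_one.mp h1
  obtain ⟨b, hb⟩ := Finset.card_eq_one.mp h2
  have hamem : a ∈ S.1 \ T.1 := ha ▸ Finset.mem_singleton_self a
  have hbmem : b ∈ T.1 \ S.1 := hb ▸ Finset.mem_singleton_self b
  have haS : a ∈ S.1 := (Finset.mem_sdiff.mp hamem).1
  have haT : a ∉ T.1 := (Finset.mem_sdiff.mp hamem).2
  have hbT : b ∈ T.1 := (Finset.mem_sdiff.mp hbmem).1
  have hbS : b ∉ S.1 := (Finset.mem_sdiff.mp hbmem).2
  have hab : a ≠ b := fun h => haT (h ▸ hbT)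
  have hmemT : ∀ x : Fin k, en S x ≠ a → en S x ∈ T.1 := by
    intro x hx
    by_contra hc
    have : en S x ∈ S.1 \ T.1 := Finset.mem_sdiff.mpr ⟨en_mem S x, hc⟩
    rw [ha, Finset.mem_singleton] at this
    exact hx this
  set oT := Finset.orderIsoOfFin T.1 T.2 with hoT
  set oS := Finset.orderIsoOfFin S.1 S.2 with hoS
  have henT : ∀ z : {x // x ∈ T.1}, en T (oT.symm z) = z :=
    fun z => congrArg Subtype.val (oT.apply_symm_apply z)
  have hmem' : ∀ x : Fin k, (if en S x = a then b else en S x) ∈ T.1 := by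
    intro x
    split_ifs with h
    · exact hbT
    · exact hmemT x h
  set t : Fin k → Fin k := fun x => oT.symm ⟨if en S x = a then b else en S x, hmem' x⟩ with ht
  have key : ∀ x, en T (t x) = if en S x = a then b else en S x := fun x => henT _
  have tinj : Function.Injective t := by
    intro x y hxy
    have hxy2 := congrArg (en T) hxy
    rw [key, key] at hxy2
    split_ifs at hxy2 with h1' h2' h2'
    · exact en_inj S (h1'.trans h2'.symm)
    · exact absurd (by rw [hxy2]; exact en_mem S y) hbS
    · exact absurd (by rw [← hxy2]; exact en_mem S x) hbS
    · exact en_inj S hxy2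
  refine ⟨Equiv.ofBijective t (Finite.injective_iff_bijective.mp tinj), ?_⟩
  set τ := Equiv.ofBijective t (Finite.injective_iff_bijective.mp tinj) with hτ
  have hτapp : ∀ x, τ x = t x := fun x => rfl
  set p := oS.symm ⟨a, haS⟩ with hp
  have hpa : en S p = a := congrArg Subtype.val (oS.apply_symm_apply ⟨a, haS⟩)
  have hpa' : ∀ x, en S x = a ↔ x = p :=
    fun x => ⟨fun h => en_inj S (h.trans hpa.symm), fun h => h ▸ hpa⟩
  intro π σ
  by_cases hσ : σ = τ * π
  · subst hσ
    rw [if_pos rfl]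
    simp only [cartPow, Matrix.of_apply, Function.comp_apply, Equiv.Perm.mul_apply]
    have hfac : ∀ j, (if en S (π j) = en T (τ (π j)) then (1:ℝ) else 0) =
        if π j = p then 0 else 1 := by
      intro j
      rw [hτapp, key (π j)]
      by_cases h : π j = p
      · simp [h, hpa, hab]
      · have hne : en S (π j) ≠ a := fun hh => h ((hpa' _).mp hh)
        simp [hne, h]
    have hterm : ∀ i : Fin k, A (en S (π i)) (en T (τ (π i))) *
        (∏ j ∈ Finset.univ.erase i, if en S (π j) = en T (τ (π j)) then (1:ℝ) else 0) =
        if i = π.symm p then 1 else 0 := by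
      intro i
      by_cases h : i = π.symm p
      · subst h
        rw [if_pos rfl]
        have hπi : π (π.symm p) = p := π.apply_symm_apply p
        have hprod : (∏ j ∈ Finset.univ.erase (π.symm p),
            if en S (π j) = en T (τ (π j)) then (1:ℝ) else 0) = 1 := by
          refine Finset.prod_eq_one fun j hj => ?_
          rw [hfac j, if_neg]
          intro hc
          exact (Finset.mem_erase.mp hj).1 (π.injective (hc.trans hπi.symm))
        rw [hprod, mul_one, hπi, hpa, hτapp, key p, if_pos hpa, hA]
        simp [hab]
      · rw [if_neg h]
        have hj0 : π.symm p ∈ Finset.univ.erase i :=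
          Finset.mem_erase.mpr ⟨fun hc => h hc.symm, Finset.mem_univ _⟩
        rw [Finset.prod_eq_zero hj0 (by rw [hfac, if_pos (π.apply_symm_apply p)]), mul_zero]
    refine (Finset.sum_congr rfl fun i _ => hterm i).trans ?_
    simp
  · rw [if_neg hσ]
    simp only [cartPow, Matrix.of_apply, Function.comp_apply]
    refine Finset.sum_eq_zero fun i _ => ?_
    have hex : ∃ j ∈ Finset.univ.erase i, en S (π j) ≠ en T (σ j) := by
      by_contra h
      push_neg at h
      have hagree : ∀ j, j ≠ i → σ j = (τ * π) j := by
        intro j hj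
        have he : en S (π j) = en T (σ j) :=
          h j (Finset.mem_erase.mpr ⟨hj, Finset.mem_univ _⟩)
        have hmem : en S (π j) ∈ T.1 := by rw [he]; exact en_mem T (σ j)
        have hna : en S (π j) ≠ a := fun hh => haT (hh ▸ hmem)
        have h3 : en T ((τ * π) j) = en S (π j) := by
          rw [Equiv.Perm.mul_apply, hτapp, key (π j), if_neg hna]
        exact en_inj T (by rw [h3, he])
      apply hσ
      have hρ : ∀ j, j ≠ i → (σ⁻¹ * (τ * π)) j = j := by
        intro j hj
        rw [Equiv.Perm.mul_apply, ← hagree j hj, (show ∀ x, σ⁻¹ (σ x) = x from σ.symm_apply_apply)]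
      have hρi : (σ⁻¹ * (τ * π)) i = i := by
        by_contra hc
        have h4 : (σ⁻¹ * (τ * π)) ((σ⁻¹ * (τ * π)) i) = (σ⁻¹ * (τ * π)) i := hρ _ hc
        exact hc ((σ⁻¹ * (τ * π)).injective h4)
      apply Equiv.ext
      intro j
      by_cases hj : j = i
      · subst hj
        have h5 := congrArg σ hρi
        rw [Equiv.Perm.mul_apply, (show ∀ x, σ (σ⁻¹ x) = x from σ.apply_symm_apply)] at h5
        exact h5.symm
      · exact hagree j hj
    obtain ⟨j, hj, hne⟩ := hex
    rw [Finset.prod_eq_zero hj (by simp [hne]), mul_zero]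


theorem stmt11 {n k : ℕ} (hk : 1 ≤ k) (hkn : k ≤ n - 1)
    (A : Matrix (Fin n) (Fin n) ℝ)
    (hA : A = Matrix.of fun i j => if i = j then 0 else 1)
    (S T : {S : Finset (Fin n) // S.card = k}) (hST : S ≠ T) :
    extPow A k S T ≠ 0 ↔ (S.1 ∩ T.1).card = k - 1 := by
  have hST' : S.1 ≠ T.1 := fun h => hST (Subtype.ext h)
  constructor
  · intro hne
    by_contra hc
    apply hne
    have hSc := S.2
    have hTc := T.2
    have hlt : (S.1 ∩ T.1).card < k - 1 := by
      have hle : (S.1 ∩ T.1).card ≤ S.1.card :=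
        Finset.card_le_card Finset.inter_subset_left
      have hneqk : (S.1 ∩ T.1).card ≠ k := by
        intro h
        apply hST'
        have h1 : S.1 ∩ T.1 = S.1 :=
          Finset.eq_of_subset_of_card_le Finset.inter_subset_left (by omega)
        refine Finset.eq_of_subset_of_card_le ?_ (by omega)
        rw [← h1]
        exact Finset.inter_subset_right
      omega
    rw [extPow_expand]
    rw [Finset.sum_eq_zero fun π _ => Finset.sum_eq_zero fun σ _ => by
      rw [cart_zero A S T hlt π σ, mul_zero], mul_zero]
  · intro hcard
    obtain ⟨τ, hτ⟩ := cart_ite A hA S T hST' hcard hk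
    rw [extPow_expand]
    have hinner : ∀ π : Equiv.Perm (Fin k),
        (∑ σ : Equiv.Perm (Fin k), ((Equiv.Perm.sign π : ℤ) : ℝ) *
          ((Equiv.Perm.sign σ : ℤ) : ℝ) * cartPow A k (en S ∘ π) (en T ∘ σ)) =
        ((Equiv.Perm.sign τ : ℤ) : ℝ) := by
      intro π
      simp only [hτ π, mul_ite, mul_one, mul_zero]
      rw [Finset.sum_ite_eq' Finset.univ (τ * π)
        (fun σ => ((Equiv.Perm.sign π : ℤ) : ℝ) * ((Equiv.Perm.sign σ : ℤ) : ℝ)),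
        if_pos (Finset.mem_univ _)]
      rcases Int.units_eq_one_or (Equiv.Perm.sign π) with h | h <;>
        simp [Equiv.Perm.sign_mul, h]
    rw [Finset.sum_congr rfl fun π _ => hinner π, Finset.sum_const, Finset.card_univ]
    have hfpos : (0:ℝ) < Real.sqrt (Nat.factorial k) :=
      Real.sqrt_pos.mpr (Nat.cast_pos.mpr k.factorial_pos)
    refine mul_ne_zero (mul_ne_zero (inv_ne_zero hfpos.ne') (inv_ne_zero hfpos.ne')) ?_
    rw [nsmul_eq_mul]
    refine mul_ne_zero (Nat.cast_ne_zero.mpr ?_) ?_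
    · exact Fintype.card_ne_zero
    · rcases Int.units_eq_one_or (Equiv.Perm.sign τ) with h | h <;> simp [h]
end

section
/- Let A be the adjacency matrix of the path P_n on Fin n (A(i,j) = 1 iff i and j differ by exactly 1, and 0 otherwise), viewed as a signed graph, and let 1 ≤ k ≤ n−1. Then every entry of ∧^k A lies in {0, 1}; in particular, ∧^k A is balanced. -/
open Matrix Finset

def pathAdj (n : ℕ) : Matrix (Fin n) (Fin n) ℝ :=
  Matrix.of fun i j => if (i : ℤ) - j = 1 ∨ (j : ℤ) - i = 1 then 1 else 0

lemma cartPow_apply' {n : ℕ} (A : Matrix (Fin n) (Fin n) ℝ) (k : ℕ) (u v : Fin k → Fin n) :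
    cartPow A k u v = ∑ i : Fin k, A (u i) (v i) *
      ∏ j : Fin k, (if j = i then 1 else if u j = v j then (1 : ℝ) else 0) := by
  unfold cartPow
  rw [Matrix.of_apply]
  refine Finset.sum_congr rfl fun i _ => ?_
  congr 1
  have h1 : ∀ j ∈ Finset.univ.erase i,
      (if j = i then (1:ℝ) else if u j = v j then 1 else 0) = (if u j = v j then 1 else 0) :=
    fun j hj => if_neg (Finset.mem_erase.1 hj).1
  rw [← Finset.prod_erase_mul Finset.univ _ (Finset.mem_univ i), Finset.prod_congr rfl h1,
    if_pos rfl, mul_one]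

lemma cartPow_comp {n k : ℕ} (A : Matrix (Fin n) (Fin n) ℝ) (u v : Fin k → Fin n)
    (σ : Equiv.Perm (Fin k)) : cartPow A k (u ∘ σ) (v ∘ σ) = cartPow A k u v := by
  rw [cartPow_apply', cartPow_apply']
  refine Fintype.sum_equiv σ _ _ fun i => ?_
  simp only [Function.comp_apply]
  congr 1
  refine Fintype.prod_equiv σ _ _ fun j => ?_
  simp [Equiv.apply_eq_iff_eq]

lemma extPow_eq_sum {n k : ℕ} (A : Matrix (Fin n) (Fin n) ℝ)
    (S T : {S : Finset (Fin n) // S.card = k}) :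
    extPow A k S T = ∑ π : Equiv.Perm (Fin k),
      ((Equiv.Perm.sign π : ℤ) : ℝ) *
        cartPow A k (enumOf inferInstance S.1 S.2) (enumOf inferInstance T.1 T.2 ∘ π) := by
  classical
  set e := enumOf (inferInstance : LinearOrder (Fin n)) S.1 S.2 with he
  set f := enumOf (inferInstance : LinearOrder (Fin n)) T.1 T.2 with hf
  set c : ℝ := (Real.sqrt (Nat.factorial k))⁻¹ with hc
  have step1 : extPow A k S T =
      ∑ v : Fin k → Fin n, (∑ u : Fin k → Fin n,
        (c * ∑ σ : Equiv.Perm (Fin k),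
          if u = e ∘ σ then ((Equiv.Perm.sign σ : ℤ) : ℝ) else 0) * cartPow A k u v) *
        (c * ∑ τ : Equiv.Perm (Fin k),
          if v = f ∘ τ then ((Equiv.Perm.sign τ : ℤ) : ℝ) else 0) := by
    simp only [extPow, alt, altOf, Matrix.mul_apply, Matrix.transpose_apply, Matrix.of_apply,
      he, hf, hc]
  have inner : ∀ (w : Fin k → Fin n) (X : (Fin k → Fin n) → ℝ),
      ∑ u : Fin k → Fin n, (c * ∑ σ : Equiv.Perm (Fin k),
        if u = w ∘ σ then ((Equiv.Perm.sign σ : ℤ) : ℝ) else 0) * X u =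
      ∑ σ : Equiv.Perm (Fin k), c * (((Equiv.Perm.sign σ : ℤ) : ℝ) * X (w ∘ σ)) := by
    intro w X
    have h1 : ∀ u : Fin k → Fin n, (c * ∑ σ : Equiv.Perm (Fin k),
        if u = w ∘ σ then ((Equiv.Perm.sign σ : ℤ) : ℝ) else 0) * X u =
        ∑ σ : Equiv.Perm (Fin k),
          if u = w ∘ σ then c * (((Equiv.Perm.sign σ : ℤ) : ℝ) * X u) else 0 := by
      intro u
      rw [Finset.mul_sum, Finset.sum_mul]
      refine Finset.sum_congr rfl fun σ _ => ?_
      by_cases h : u = w ∘ σ <;> simp [h, mul_assoc]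
    rw [Finset.sum_congr rfl fun u _ => h1 u, Finset.sum_comm]
    refine Finset.sum_congr rfl fun σ _ => ?_
    rw [Finset.sum_ite_eq' Finset.univ (w ∘ σ)
      (fun u => c * (((Equiv.Perm.sign σ : ℤ) : ℝ) * X u)), if_pos (Finset.mem_univ _)]
  set sg : Equiv.Perm (Fin k) → ℝ := fun π => ((Equiv.Perm.sign π : ℤ) : ℝ) with hsg
  have hsgmul : ∀ a b : Equiv.Perm (Fin k), sg (a * b) = sg a * sg b := by
    intro a b
    simp only [hsg, Equiv.Perm.sign_mul, Units.val_mul, Int.cast_mul]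
  have hsgsq : ∀ a : Equiv.Perm (Fin k), sg a * sg a = 1 := by
    intro a
    simp only [hsg, ← Int.cast_mul, ← Units.val_mul, Int.units_mul_self, Units.val_one,
      Int.cast_one]
  have hcomp : ∀ σ τ : Equiv.Perm (Fin k),
      cartPow A k (e ∘ σ) (f ∘ τ) = cartPow A k e (f ∘ ⇑(τ * σ⁻¹)) := by
    intro σ τ
    rw [← cartPow_comp A e (f ∘ ⇑(τ * σ⁻¹)) σ]
    congr 1
    funext x
    simp [Equiv.Perm.mul_apply]
  calc extPow A k S T
      = ∑ v : Fin k → Fin n, (∑ σ : Equiv.Perm (Fin k), c * (sg σ * cartPow A k (e ∘ σ) v)) *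
          (c * ∑ τ : Equiv.Perm (Fin k), if v = f ∘ τ then sg τ else 0) := by
        rw [step1]
        exact Finset.sum_congr rfl fun v _ => by rw [inner e (fun u => cartPow A k u v)]
    _ = ∑ τ : Equiv.Perm (Fin k),
          c * (sg τ * (∑ σ : Equiv.Perm (Fin k), c * (sg σ * cartPow A k (e ∘ σ) (f ∘ τ)))) := by
        rw [← inner f (fun v => ∑ σ : Equiv.Perm (Fin k), c * (sg σ * cartPow A k (e ∘ σ) v))]
        exact Finset.sum_congr rfl fun v _ => mul_comm _ _
    _ = ∑ τ : Equiv.Perm (Fin k), ∑ σ : Equiv.Perm (Fin k),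
          (c * c) * (sg τ * sg σ * cartPow A k e (f ∘ ⇑(τ * σ⁻¹))) := by
        refine Finset.sum_congr rfl fun τ _ => ?_
        rw [show c * (sg τ * ∑ σ : Equiv.Perm (Fin k), c * (sg σ * cartPow A k (e ∘ σ) (f ∘ τ)))
            = ∑ σ : Equiv.Perm (Fin k), c * (sg τ * (c * (sg σ * cartPow A k (e ∘ σ) (f ∘ τ))))
          by rw [Finset.mul_sum, Finset.mul_sum]]
        refine Finset.sum_congr rfl fun σ _ => ?_
        rw [hcomp σ τ]
        ring
    _ = ∑ σ : Equiv.Perm (Fin k), ∑ π : Equiv.Perm (Fin k),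
          (c * c) * (sg π * cartPow A k e (f ∘ π)) := by
        rw [Finset.sum_comm]
        refine Finset.sum_congr rfl fun σ _ => ?_
        rw [← Equiv.sum_comp (Equiv.mulRight σ)
          (fun τ => (c * c) * (sg τ * sg σ * cartPow A k e (f ∘ ⇑(τ * σ⁻¹))))]
        refine Finset.sum_congr rfl fun π _ => ?_
        simp only [Equiv.coe_mulRight]
        rw [show π * σ * σ⁻¹ = π by group, hsgmul π σ]
        rw [show sg π * sg σ * sg σ = sg π * (sg σ * sg σ) by ring, hsgsq σ, mul_one]
    _ = (Fintype.card (Equiv.Perm (Fin k))) •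
          ∑ π : Equiv.Perm (Fin k), (c * c) * (sg π * cartPow A k e (f ∘ π)) := by
        rw [Finset.sum_const, Finset.card_univ]
    _ = ∑ π : Equiv.Perm (Fin k), sg π * cartPow A k e (f ∘ π) := by
        rw [Finset.smul_sum]
        refine Finset.sum_congr rfl fun π _ => ?_
        rw [nsmul_eq_mul, ← mul_assoc]

        have h1 : c * c = ((k.factorial : ℝ))⁻¹ := by
          rw [hc, ← mul_inv, Real.mul_self_sqrt (Nat.cast_nonneg _)]
        have hcc : (Fintype.card (Equiv.Perm (Fin k)) : ℝ) * (c * c) = 1 := by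
          rw [h1, Fintype.card_perm, Fintype.card_fin]
          have : ((k.factorial : ℝ)) ≠ 0 := by positivity
          exact mul_inv_cancel₀ this
        rw [hcc, one_mul]

lemma pathAdj_ne_zero {n : ℕ} {a b : Fin n} (h : pathAdj n a b ≠ 0) :
    ((a : ℤ) - b = 1 ∨ (b : ℤ) - a = 1) ∧ pathAdj n a b = 1 := by
  unfold pathAdj at *
  rw [Matrix.of_apply] at h ⊢
  by_cases hc : ((a : ℤ) - b = 1 ∨ (b : ℤ) - a = 1)
  · exact ⟨hc, if_pos hc⟩
  · exact absurd (if_neg hc) h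

lemma cast_lt_iff {n : ℕ} (x y : Fin n) : x < y ↔ ((x : ℤ) < (y : ℤ)) :=
  ⟨fun h => by exact_mod_cast h, fun h => by exact_mod_cast h⟩

lemma cast_ne_of_ne {n : ℕ} {x y : Fin n} (h : x ≠ y) : ((x : ℤ) ≠ (y : ℤ)) :=
  fun hc => h (Fin.ext (by exact_mod_cast hc))

lemma cartPow_path01 {n k : ℕ} (e f : Fin k → Fin n) :
    cartPow (pathAdj n) k e f = 0 ∨ cartPow (pathAdj n) k e f = 1 := by
  classical
  unfold cartPow
  rw [Matrix.of_apply]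
  by_cases H : ∀ i : Fin k, pathAdj n (e i) (f i) *
      ∏ j ∈ Finset.univ.erase i, (if e j = f j then (1 : ℝ) else 0) = 0
  · exact Or.inl (Finset.sum_eq_zero fun i _ => H i)
  right
  push_neg at H
  obtain ⟨i0, hi0⟩ := H
  have hA : pathAdj n (e i0) (f i0) ≠ 0 := fun h => hi0 (by rw [h, zero_mul])
  have hprod : (∏ j ∈ Finset.univ.erase i0, (if e j = f j then (1 : ℝ) else 0)) ≠ 0 :=
    fun h => hi0 (by rw [h, mul_zero])
  have heq : ∀ j, j ≠ i0 → e j = f j := by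
    intro j hj
    by_contra hne
    exact hprod (Finset.prod_eq_zero (Finset.mem_erase.2 ⟨hj, Finset.mem_univ j⟩) (if_neg hne))
  have hne0 : e i0 ≠ f i0 := by
    intro h
    obtain ⟨hd, _⟩ := pathAdj_ne_zero hA
    rw [h] at hd
    omega
  rw [Finset.sum_eq_single i0]
  · rw [(pathAdj_ne_zero hA).2, one_mul]
    exact Finset.prod_eq_one fun j hj => if_pos (heq j (Finset.mem_erase.1 hj).1)
  · intro i _ hii0
    apply mul_eq_zero_of_right
    exact Finset.prod_eq_zero (Finset.mem_erase.2 ⟨Ne.symm hii0, Finset.mem_univ i0⟩)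
      (if_neg hne0)
  · intro h
    exact absurd (Finset.mem_univ i0) h

lemma cartPow_path_perm {n k : ℕ} {e f : Fin k → Fin n} (he : StrictMono e) (hf : StrictMono f)
    {π : Equiv.Perm (Fin k)} (hπ : π ≠ 1) : cartPow (pathAdj n) k e (f ∘ π) = 0 := by
  classical
  unfold cartPow
  rw [Matrix.of_apply]
  apply Finset.sum_eq_zero
  intro i _
  by_cases hA : pathAdj n (e i) ((f ∘ π) i) = 0
  · rw [hA, zero_mul]
  by_cases hprod : ∃ j ∈ Finset.univ.erase i, e j ≠ (f ∘ π) j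
  · obtain ⟨j, hj, hne⟩ := hprod
    exact mul_eq_zero_of_right _ (Finset.prod_eq_zero hj (if_neg hne))
  exfalso
  push_neg at hprod
  have heq : ∀ j, j ≠ i → e j = f (π j) :=
    fun j hj => hprod j (Finset.mem_erase.2 ⟨hj, Finset.mem_univ j⟩)
  obtain ⟨hd, _⟩ := pathAdj_ne_zero hA
  simp only [Function.comp_apply] at hd
  apply hπ
  have iff1 : ∀ j, j ≠ i → (j < i ↔ π j < π i) := by
    intro j hj
    have h1 : ((e j : ℤ)) ≠ ((e i : ℤ)) := cast_ne_of_ne (fun h => hj (he.injective h))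
    have h2 : ((e j : ℤ)) ≠ ((f (π i) : ℤ)) := by
      rw [heq j hj]
      exact cast_ne_of_ne (fun h => hj (π.injective (hf.injective h)))
    constructor
    · intro h
      have h3 : (e j : ℤ) < (e i : ℤ) := (cast_lt_iff _ _).1 (he h)
      have h4 : (e j : ℤ) < (f (π i) : ℤ) := by omega
      have h5 : f (π j) < f (π i) := (cast_lt_iff _ _).2 (by rw [← heq j hj]; exact h4)
      exact hf.lt_iff_lt.1 h5
    · intro h
      have h3 : (e j : ℤ) < (f (π i) : ℤ) := by
        rw [heq j hj]; exact (cast_lt_iff _ _).1 (hf h)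
      have h4 : (e j : ℤ) < (e i : ℤ) := by omega
      exact he.lt_iff_lt.1 ((cast_lt_iff _ _).2 h4)
  have iff2 : ∀ j j', j ≠ i → j' ≠ i → j < j' → π j < π j' := by
    intro j j' hj hj' h
    have : f (π j) < f (π j') := by rw [← heq j hj, ← heq j' hj']; exact he h
    exact hf.lt_iff_lt.1 this
  have hmono : StrictMono (π : Fin k → Fin k) := by
    intro a b hab
    rcases eq_or_ne a i with heqai | ha
    · subst heqai
      have hb : b ≠ a := Ne.symm (ne_of_lt hab)
      rcases lt_trichotomy (π a) (π b) with h | h | h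
      · exact h
      · exact absurd (π.injective h) (ne_of_lt hab)
      · exact absurd ((iff1 b hb).2 h) (not_lt.2 (le_of_lt hab))
    · rcases eq_or_ne b i with rfl | hb
      · exact (iff1 a ha).1 hab
      · exact iff2 a b ha hb hab
  have hid : (π : Fin k → Fin k) = id :=
    (hmono.range_inj strictMono_id).1
      ((π.surjective.range_eq).trans Set.range_id.symm)
  exact Equiv.ext fun x => congrFun hid x

lemma enumOf_strictMono {n k : ℕ} (S : Finset (Fin n)) (h : S.card = k) :
    StrictMono (enumOf inferInstance S h) :=
  fun a b hab => Subtype.coe_lt_coe.2 ((S.orderIsoOfFin h).strictMono hab)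

lemma extPow_path01 {n k : ℕ} (S T : {S : Finset (Fin n) // S.card = k}) :
    extPow (pathAdj n) k S T = 0 ∨ extPow (pathAdj n) k S T = 1 := by
  classical
  rw [extPow_eq_sum]
  rw [Finset.sum_eq_single (1 : Equiv.Perm (Fin k))]
  · simp only [Equiv.Perm.sign_one, Units.val_one, Int.cast_one, one_mul]
    have : (enumOf inferInstance T.1 T.2) ∘ ⇑(1 : Equiv.Perm (Fin k)) =
        enumOf inferInstance T.1 T.2 := by
      funext x; rfl
    rw [this]
    exact cartPow_path01 _ _
  · intro π _ hπ
    rw [cartPow_path_perm (enumOf_strictMono S.1 S.2) (enumOf_strictMono T.1 T.2) hπ, mul_zero]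
  · intro h
    exact absurd (Finset.mem_univ _) h

lemma balanced_of_01 {ι : Type*} [Fintype ι] [DecidableEq ι] (B : Matrix ι ι ℝ)
    (h : ∀ i j, B i j = 0 ∨ B i j = 1) : IsBalancedMatrix B := by
  refine ⟨1, Matrix.isDiag_one, fun i => Or.inl (Matrix.one_apply_eq i), ?_⟩
  rw [Matrix.mul_one, Matrix.one_mul]
  ext i j
  rcases h i j with h' | h' <;> simp [h']

theorem stmt12 {n k : ℕ} (hk : 1 ≤ k) (hkn : k ≤ n - 1) :
    (∀ S T : {S : Finset (Fin n) // S.card = k},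
        extPow (pathAdj n) k S T = 0 ∨ extPow (pathAdj n) k S T = 1) ∧
    IsBalancedMatrix (extPow (pathAdj n) k) := by
  exact ⟨fun S T => extPow_path01 S T, balanced_of_01 _ fun S T => extPow_path01 S T⟩
end
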